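/- arXiv:2203.06535 — 5 statements merged into one kernel-verified Lean document; each statement's English description precedes it below -/
import Mathlib

section
/- Let S be a finite semigroup. Then there exists a natural number n such that for every sequence s₁, s₂, …, sₙ of elements of S there exist indices i, j with 1 ≤ i ≤ j ≤ n for which the product sᵢ·sᵢ₊₁·…·sⱼ is an idempotent. -/
/-!
Common definitions for formalizing "Well Quasi-Orders Arising from Finite
Ordered Semigroups" (Klíma, Kolegar).

Words over an alphabet `A` are modelled as `List A`; nonempty words are often
given as a head letter together with the tail list.
-/

/-- The product `σ(a)·σ(b₁)⋯σ(bₖ)` of the nonempty word `a :: w`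
(where `w = [b₁,…,bₖ]`) under the multiplicative extension of `σ`. -/
def wordProd {A S : Type} [Semigroup S] (σ : A → S) (a : A) (w : List A) : S :=
  w.foldl (fun s b => s * σ b) (σ a)

/-- The relation `u ≤σ v` on finite words: there are factorizations
`u = a₁…aₙ` into letters and `v = v₁…vₙ` into nonempty words with
`σ(aᵢ) ≤ σ(vᵢ)` for all `i`.  The order on `S` is passed explicitly
as a relation `le`. -/
inductive LeSigma {A S : Type} [Semigroup S] (le : S → S → Prop) (σ : A → S) :
    List A → List A → Prop
  | nil : LeSigma le σ [] []
  | cons {a b : A} {v u w : List A} :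
      le (σ a) (wordProd σ b v) → LeSigma le σ u w →
      LeSigma le σ (a :: u) (b :: (v ++ w))

/-- A relation on finite words is a well quasi-order if every infinite
sequence of words has indices `i < j` with the `i`-th word below the `j`-th. -/
def IsWqo {A : Type} (r : List A → List A → Prop) : Prop :=
  ∀ f : ℕ → List A, ∃ i j : ℕ, i < j ∧ r (f i) (f j)

/-- A finite ordered semigroup `S` (with order relation `le`) is congenial if
for every finite alphabet `A` and every map `σ : A → S` the relation `≤σ`
is a well quasi-order. -/
def Congenial (S : Type) [Semigroup S] (le : S → S → Prop) : Prop :=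
  ∀ (A : Type) [Fintype A] (σ : A → S), IsWqo (LeSigma le σ)

/-- Stability of an order relation on a semigroup: it is compatible with
multiplication on both sides. -/
def Stable {S : Type} [Semigroup S] (le : S → S → Prop) : Prop :=
  ∀ x y s : S, le x y → le (s * x) (s * y) ∧ le (x * s) (y * s)

/-- `sPow s n = s^(n+1)`: the `(n+1)`-st power of `s` in a semigroup. -/
def sPow {S : Type} [Semigroup S] (s : S) : ℕ → S
  | 0 => s
  | n + 1 => sPow s n * s

/-- `e` is the idempotent positive power `s^ω` of `s`: it is a positive power
of `s` and it is idempotent.  (In a finite semigroup such an `e` exists and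
is unique.) -/
def IsIdemPow {S : Type} [Semigroup S] (s e : S) : Prop :=
  (∃ n : ℕ, e = sPow s n) ∧ e * e = e

/-- `seqProd s i k` is the product `s i * s (i+1) * ⋯ * s (i+k)`. -/
def seqProd {S : Type} [Semigroup S] (s : ℕ → S) (i : ℕ) : ℕ → S
  | 0 => s i
  | k + 1 => seqProd s i k * s (i + k + 1)

/-- The (finite, nonempty) word `v` is a factor `w(i)w(i+1)…w(j)` of the
infinite word `w : ℕ → A`. -/
def FactorOf {A : Type} (v : List A) (w : ℕ → A) : Prop :=
  ∃ i n : ℕ, v = (List.range (n + 1)).map fun k => w (i + k)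

/-- A set `L` of (nonempty) finite words over `A` is unavoidable if every
infinite word over `A` has a finite factor belonging to `L`. -/
def Unavoidable {A : Type} (L : Set (List A)) : Prop :=
  ∀ w : ℕ → A, ∃ v ∈ L, FactorOf v w

/-- `listPow u p` is the concatenation of `p` copies of the word `u`. -/
def listPow {A : Type} (u : List A) : ℕ → List A
  | 0 => []
  | n + 1 => u ++ listPow u n

/-- The product of a nonempty list of semigroup elements. -/
def neProd {S : Type} [Semigroup S] : (l : List S) → l ≠ [] → S
  | [], h => absurd rfl h
  | a :: t, _ => wordProd id a t

/-- The periodic infinite word `u^∞ = uuu…` determined by a nonempty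
finite word `u`. -/
def periodicWord {A : Type} (u : List A) (h : u ≠ []) : ℕ → A :=
  fun n => u.get ⟨n % u.length, Nat.mod_lt _ (List.length_pos_iff.mpr h)⟩

/-- An ideal of a semigroup: a nonempty subset closed under multiplication by
arbitrary elements on both sides. -/
def IsIdeal {S : Type} [Mul S] (I : Set S) : Prop :=
  I.Nonempty ∧ ∀ t ∈ I, ∀ s : S, t * s ∈ I ∧ s * t ∈ I

lemma seqProd_append' {S : Type} [Semigroup S] (s : ℕ → S) (i a : ℕ) :
    ∀ b, seqProd s i a * seqProd s (i + a + 1) b = seqProd s i (a + b + 1)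
  | 0 => rfl
  | b + 1 => by
    show seqProd s i a * (seqProd s (i + a + 1) b * s (i + a + 1 + b + 1)) =
      seqProd s i (a + b + 1) * s (i + (a + b + 1) + 1)
    rw [← mul_assoc, seqProd_append' s i a b]
    congr 2
    omega

lemma seqProd_mem' {S : Type} [Semigroup S] (T : Finset S)
    (hT : ∀ a ∈ T, ∀ b ∈ T, a * b ∈ T) (s : ℕ → S) (hs : ∀ i, s i ∈ T) (i : ℕ) :
    ∀ m, seqProd s i m ∈ T
  | 0 => hs i
  | m + 1 => hT _ (seqProd_mem' T hT s hs i m) _ (hs (i + m + 1))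

lemma main_lemma' {S : Type} [Semigroup S] [DecidableEq S] (k : ℕ) :
    ∃ n : ℕ, 0 < n ∧ ∀ T : Finset S, (∀ a ∈ T, ∀ b ∈ T, a * b ∈ T) → T.card ≤ k →
      ∀ s : ℕ → S, (∀ i, s i ∈ T) →
        ∃ i j, i ≤ j ∧ j < n ∧
          seqProd s i (j - i) * seqProd s i (j - i) = seqProd s i (j - i) := by
  induction k with
  | zero =>
      refine ⟨1, one_pos, fun T hT hcard s hs => absurd (hs 0) ?_⟩
      simp [Finset.card_eq_zero.mp (Nat.le_zero.mp hcard)]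
  | succ k ih =>
      obtain ⟨n', hn', IH⟩ := ih
      refine ⟨(k + 1) * n' + 1, Nat.succ_pos _, fun T hT hcard s hs => ?_⟩
      set n := (k + 1) * n' + 1 with hn
      have hmaps : ∀ j ∈ Finset.range n, seqProd s 0 j ∈ T :=
        fun j _ => seqProd_mem' T hT s hs 0 j
      have hlt : T.card * n' < (Finset.range n).card := by
        rw [Finset.card_range]
        have : T.card * n' ≤ (k + 1) * n' := Nat.mul_le_mul_right _ hcard
        omega
      obtain ⟨x, hxT, hfib⟩ := Finset.exists_lt_card_fiber_of_mul_lt_card_of_maps_to hmaps hlt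
      obtain ⟨t, htsub, htcard⟩ := Finset.exists_subset_card_eq hfib
      set κ : ℕ → ℕ := fun a => ((t.orderIsoOfFin htcard) ⟨min a n', by omega⟩ : ℕ) with hκ
      have hκmono : ∀ a b, a < b → b ≤ n' → κ a < κ b := by
        intro a b hab hb
        have h : (⟨min a n', by omega⟩ : Fin (n' + 1)) < ⟨min b n', by omega⟩ := by
          simp only [Fin.mk_lt_mk]; omega
        exact (t.orderIsoOfFin htcard).strictMono h
      have hκmem : ∀ a, κ a ∈ t := fun a => ((t.orderIsoOfFin htcard) _).2
      have hκfib : ∀ a, seqProd s 0 (κ a) = x ∧ κ a < n := by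
        intro a
        have h1 := htsub (hκmem a)
        simp only [Finset.mem_filter, Finset.mem_range] at h1
        exact ⟨h1.2, h1.1⟩
      by_cases hxx : x * x = x
      · refine ⟨0, κ 0, Nat.zero_le _, (hκfib 0).2, ?_⟩
        rw [Nat.sub_zero, (hκfib 0).1]; exact hxx
      · set T' : Finset S := T.filter (fun u => x * u = x) with hT'
        have hT'closed : ∀ a ∈ T', ∀ b ∈ T', a * b ∈ T' := by
          intro a ha b hb
          simp only [hT', Finset.mem_filter] at ha hb ⊢
          exact ⟨hT a ha.1 b hb.1, by rw [← mul_assoc, ha.2, hb.2]⟩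
        have hT'card : T'.card ≤ k := by
          have hsub : T' ⊆ T.erase x := by
            intro u hu
            simp only [hT', Finset.mem_filter] at hu
            refine Finset.mem_erase.mpr ⟨?_, hu.1⟩
            rintro rfl; exact hxx hu.2
          have h1 := Finset.card_le_card hsub
          rw [Finset.card_erase_of_mem hxT] at h1
          omega
        set e : ℕ → S := fun a =>
          seqProd s (κ (min a (n' - 1)) + 1) (κ (min a (n' - 1) + 1) - κ (min a (n' - 1)) - 1)
          with he
        have heval : ∀ a, a < n' → e a = seqProd s (κ a + 1) (κ (a + 1) - κ a - 1) := by
          intro a ha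
          simp only [he]
          have h : min a (n' - 1) = a := by omega
          rw [h]
        have hgap : ∀ a, e a ∈ T' := by
          intro a
          set b := min a (n' - 1) with hb
          have hb1 : b + 1 ≤ n' := by omega
          have hlt2 : κ b < κ (b + 1) := hκmono b (b + 1) (Nat.lt_succ_self _) hb1
          have hx1 : seqProd s 0 (κ b) = x := (hκfib b).1
          have hx2 : seqProd s 0 (κ (b + 1)) = x := (hκfib (b + 1)).1
          refine Finset.mem_filter.mpr ⟨seqProd_mem' T hT s hs _ _, ?_⟩
          have happ := seqProd_append' s 0 (κ b) (κ (b + 1) - κ b - 1)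
          rw [show (0 : ℕ) + κ b + 1 = κ b + 1 from by omega] at happ
          rw [show κ b + (κ (b + 1) - κ b - 1) + 1 = κ (b + 1) from by omega] at happ
          calc x * seqProd s (κ b + 1) (κ (b + 1) - κ b - 1)
              = seqProd s 0 (κ b) * seqProd s (κ b + 1) (κ (b + 1) - κ b - 1) := by rw [hx1]
            _ = seqProd s 0 (κ (b + 1)) := happ
            _ = x := hx2
        obtain ⟨i, j, hij, hjn', hidem⟩ := IH T' hT'closed hT'card e hgap
        have hin' : i < n' := lt_of_le_of_lt hij hjn'
        have key : ∀ d, i + d < n' →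
            seqProd e i d = seqProd s (κ i + 1) (κ (i + d + 1) - κ i - 1) := by
          intro d
          induction d with
          | zero => intro h; exact heval i h
          | succ d ihd =>
              intro h
              have h1 : i + d < n' := by omega
              have h2 : i + d + 1 < n' := by omega
              show seqProd e i d * e (i + d + 1) =
                seqProd s (κ i + 1) (κ (i + d + 1 + 1) - κ i - 1)
              rw [ihd h1, heval (i + d + 1) h2]
              have m1 : κ i < κ (i + d + 1) := hκmono _ _ (by omega) (by omega)
              have m2 : κ (i + d + 1) < κ (i + d + 1 + 1) := hκmono _ _ (by omega) (by omega)
              have happ := seqProd_append' s (κ i + 1) (κ (i + d + 1) - κ i - 1)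
                (κ (i + d + 1 + 1) - κ (i + d + 1) - 1)
              rw [show κ i + 1 + (κ (i + d + 1) - κ i - 1) + 1 = κ (i + d + 1) + 1 from by omega]
                at happ
              rw [happ]
              congr 1
              omega
        have hkey := key (j - i) (by omega)
        have hm : κ i < κ (j + 1) := hκmono _ _ (by omega) (by omega)
        refine ⟨κ i + 1, κ (j + 1), by omega, (hκfib (j + 1)).2, ?_⟩
        have hidx : κ (j + 1) - (κ i + 1) = κ (i + (j - i) + 1) - κ i - 1 := by
          rw [show i + (j - i) + 1 = j + 1 from by omega]
          omega
        rw [hidx, ← hkey]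
        exact hidem

/-- In a finite semigroup `S` there exists `n` such that every
sequence `s₁,…,sₙ` of elements of `S` has consecutive indices `i ≤ j` whose
product `sᵢ·sᵢ₊₁⋯sⱼ` is idempotent.  (Indices are 0-based here.) -/
theorem stmt_0 {S : Type} [Fintype S] [Semigroup S] :
    ∃ n : ℕ, ∀ s : ℕ → S, ∃ i j : ℕ, i ≤ j ∧ j < n ∧
      seqProd s i (j - i) * seqProd s i (j - i) = seqProd s i (j - i) := by
  have : DecidableEq S := Classical.decEq S
  obtain ⟨n, -, h⟩ := main_lemma' (S := S) (Fintype.card S)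
  exact ⟨n, fun s => h Finset.univ (fun a _ b _ => Finset.mem_univ _)
    (le_of_eq Finset.card_univ) s (fun i => Finset.mem_univ _)⟩
end

section
/- A finite ordered semigroup S is congenial if and only if the relation ≤_eval is a well quasi-order on the set of finite words over the alphabet S, where eval : S → S is the identity map (so its multiplicative extension sends a nonempty word s₁s₂…sₖ over S to the product s₁·s₂·…·sₖ). -/
lemma map_split {A S : Type} (σ : A → S) :
    ∀ {p : List S} {t : List A} {q : List S}, t.map σ = p ++ q →
      ∃ t1 t2, t = t1 ++ t2 ∧ t1.map σ = p ∧ t2.map σ = q := by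
  intro p
  induction p with
  | nil => intro t q h; exact ⟨[], t, rfl, rfl, h⟩
  | cons x xs ih =>
    intro t q h
    cases t with
    | nil => simp at h
    | cons a t' =>
      simp only [List.map_cons, List.cons_append, List.cons.injEq] at h
      obtain ⟨h1, h2⟩ := h
      obtain ⟨t1, t2, ht, hm1, hm2⟩ := ih h2
      exact ⟨a :: t1, t2, by rw [ht]; rfl, by simp [hm1, h1], hm2⟩

lemma wordProd_map {A S : Type} [Semigroup S] (σ : A → S) (a : A) (w : List A) :
    wordProd (id : S → S) (σ a) (w.map σ) = wordProd σ a w := by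
  simp [wordProd, List.foldl_map]

lemma leSigma_of_map {A S : Type} [Semigroup S] (le : S → S → Prop) (σ : A → S)
    {u' v' : List S} (h : LeSigma le id u' v') :
    ∀ {u v : List A}, u' = u.map σ → v' = v.map σ → LeSigma le σ u v := by
  induction h with
  | nil =>
    intro u v hu hv
    rw [List.nil_eq, List.map_eq_nil_iff] at hu hv
    subst hu; subst hv; exact LeSigma.nil
  | @cons a' b' v'' u'' w'' h1 h2 ih =>
    intro u v hu hv
    cases u with
    | nil => simp at hu
    | cons a u0 =>
      cases v with
      | nil => simp at hv
      | cons b t =>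
        simp only [List.map_cons, List.cons.injEq] at hu hv
        obtain ⟨ha, hu0⟩ := hu
        obtain ⟨hb, ht⟩ := hv
        obtain ⟨t1, t2, ht12, hm1, hm2⟩ := map_split σ ht.symm
        subst ht12
        have h1' : le (σ a) (wordProd σ b t1) := by
          rw [← wordProd_map σ b t1, hm1, ← hb, ← ha]; exact h1
        exact LeSigma.cons h1' (ih hu0 hm2.symm)

/-- a finite ordered semigroup `S` is congenial iff `≤_eval` is a
wqo on words over the alphabet `S`, where `eval` is the identity map on `S`
(its multiplicative extension evaluates a word to the product of its letters). -/
theorem stmt_3 {S : Type} [Fintype S] [Semigroup S] [PartialOrder S]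
    (hst : Stable ((· ≤ ·) : S → S → Prop)) :
    Congenial S (· ≤ ·) ↔ IsWqo (LeSigma (· ≤ ·) (id : S → S)) := by
  constructor
  · intro hc
    exact hc S (id : S → S)
  · intro hw A _ σ f
    obtain ⟨i, j, hij, h⟩ := hw fun n => (f n).map σ
    exact ⟨i, j, hij, leSigma_of_map _ σ h rfl rfl⟩
end

section
/- Let S be a finite ordered semigroup satisfying the inequality x ≤ x · (y·x)^ω for all x, y ∈ S. Then S is congenial. -/
set_option linter.unusedSectionVars false

namespace Stmt5
open List

variable {S : Type} [Fintype S] [Semigroup S] [PartialOrder S]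

/-! ### values in `WithOne S` -/

def val (l : List S) : WithOne S := (l.map (fun s => (s : WithOne S))).prod

@[simp] lemma val_nil : val ([] : List S) = 1 := rfl

@[simp] lemma val_cons (x : S) (l : List S) : val (x :: l) = ↑x * val l := by
  simp [val]

@[simp] lemma val_append (l₁ l₂ : List S) : val (l₁ ++ l₂) = val l₁ * val l₂ := by
  simp [val]

lemma val_singleton (x : S) : val [x] = ↑x := by simp

lemma val_cons_ne_one : ∀ (t : List S) (x : S), val (x :: t) ≠ 1 := by
  intro t
  induction t with
  | nil => intro x; simpa using WithOne.coe_ne_one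
  | cons y t ih =>
    intro x
    have : val (x :: y :: t) = val ((x*y) :: t) := by simp [mul_assoc]
    rw [this]; exact ih (x*y)

lemma val_ne_one {l : List S} (h : l ≠ []) : val l ≠ 1 := by
  cases l with
  | nil => exact absurd rfl h
  | cons x t => exact val_cons_ne_one t x

lemma val_eq_one_iff {l : List S} : val l = 1 ↔ l = [] := by
  constructor
  · intro h; by_contra hne; exact val_ne_one hne h
  · rintro rfl; rfl

lemma val_cons_exists_coe : ∀ (t : List S) (x : S), ∃ s : S, val (x :: t) = ↑s := by
  intro t
  induction t with
  | nil => intro x; exact ⟨x, by simp⟩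
  | cons y t ih =>
    intro x
    obtain ⟨s, hs⟩ := ih (x*y)
    refine ⟨s, ?_⟩
    rw [← hs]; simp [mul_assoc]

lemma val_exists_coe {l : List S} (h : l ≠ []) : ∃ s : S, val l = ↑s := by
  cases l with
  | nil => exact absurd rfl h
  | cons x t => exact val_cons_exists_coe t x

lemma withOne_cases (t : WithOne S) : t = 1 ∨ ∃ s : S, t = ↑s :=
  WithOne.cases_on t (Or.inl rfl) (fun a => Or.inr ⟨a, rfl⟩)

lemma coe_wordProd (b : S) (v : List S) :
    (↑(wordProd id b v) : WithOne S) = val (b :: v) := by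
  induction v generalizing b with
  | nil => simp [wordProd]
  | cons c t ih =>
    have h1 : wordProd id b (c :: t) = wordProd id (b*c) t := rfl
    rw [h1, ih]
    simp [mul_assoc]

/-! ### powers -/

lemma sPow_add (x : S) (m n : ℕ) : sPow x m * sPow x n = sPow x (m + n + 1) := by
  induction n with
  | zero => rfl
  | succ n ih =>
    show sPow x m * (sPow x n * x) = _
    rw [← mul_assoc, ih]; rfl

lemma sPow_succ_left (x : S) (n : ℕ) : sPow x (n + 1) = x * sPow x n := by
  induction n with
  | zero => rfl
  | succ n ih =>
    show sPow x (n+1) * x = x * sPow x (n+1)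
    calc sPow x (n+1) * x = (x * sPow x n) * x := by rw [ih]
    _ = x * (sPow x n * x) := mul_assoc _ _ _
    _ = x * sPow x (n+1) := rfl

lemma exists_idem_sPow (x : S) : ∃ n : ℕ, sPow x n * sPow x n = sPow x n := by
  obtain ⟨i, j, hne, heq⟩ := Finite.exists_ne_map_eq_of_infinite (fun n : ℕ => sPow x n)
  wlog hij : i < j generalizing i j
  · exact this j i hne.symm heq.symm (by omega)
  set p := j - i with hp
  have hp1 : 0 < p := by omega
  have hbase : sPow x (i + p) = sPow x i := by
    rw [hp]; rw [show i + (j - i) = j by omega]; exact heq.symm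
  have hshift : ∀ t, sPow x (i + t + p) = sPow x (i + t) := by
    intro t
    induction t with
    | zero => simpa using hbase
    | succ t ih =>
      have h1 : i + (t+1) + p = (i + t + p) + 1 := by omega
      rw [h1, show i + (t+1) = (i+t)+1 from rfl]
      show sPow x (i + t + p) * x = sPow x (i+t) * x
      rw [ih]
  have hmult : ∀ m t, sPow x (i + t + m * p) = sPow x (i + t) := by
    intro m
    induction m with
    | zero => intro t; simp
    | succ m ih =>
      intro t
      have hmp : (m+1) * p = m*p + p := by ring
      have h1 : i + t + (m+1) * p = (i + (t + m*p)) + p := by omega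
      rw [h1]
      have h2 : (i + (t + m*p)) + p = i + (t + m*p) + p := rfl
      rw [h2, hshift (t + m*p), ← Nat.add_assoc, ih]
  have hple : 1 * (i+1) ≤ p * (i+1) := Nat.mul_le_mul_right _ hp1
  refine ⟨p * (i+1) - 1, ?_⟩
  have hk : p * (i+1) - 1 ≥ i := by omega
  set k := p * (i+1) - 1 with hkdef
  have hk1 : k + 1 = p * (i+1) := by omega
  have hcomm : p * (i+1) = (i+1) * p := Nat.mul_comm _ _
  have h2 : k + k + 1 = i + (k - i) + (i+1) * p := by omega
  rw [sPow_add, h2, hmult, show i + (k - i) = k by omega]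

lemma sPow_idem_eq {e : S} (he : e * e = e) : ∀ n, sPow e n = e := by
  intro n; induction n with
  | zero => rfl
  | succ n ih => show sPow e n * e = e; rw [ih, he]

/-! ### absorption lemmas from the identity -/

lemma mul_le_mul'' (hst : Stable ((· ≤ ·) : S → S → Prop)) {a b c d : S}
    (h1 : a ≤ b) (h2 : c ≤ d) : a * c ≤ b * d :=
  le_trans (hst c d a h2).1 (hst a b d h1).2

lemma absorbR (hid : ∀ x y e : S, IsIdemPow (y * x) e → x ≤ x * e)
    {x e : S} (he : e * e = e) (hl : e = x ∨ ∃ y, e = y * x) : x ≤ x * e := by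
  rcases hl with rfl | ⟨y, rfl⟩
  · rw [he]
  · exact hid x y _ ⟨⟨0, rfl⟩, he⟩

lemma absorbL (hid : ∀ x y e : S, IsIdemPow (y * x) e → x ≤ x * e)
    {x e : S} (he : e * e = e) (hl : e = x ∨ ∃ z, e = x * z) : x ≤ e * x := by
  rcases hl with rfl | ⟨z, rfl⟩
  · rw [he]
  · obtain ⟨n, hn⟩ := exists_idem_sPow (z * x)
    have h1 : x ≤ x * sPow (z*x) n := hid x z _ ⟨⟨n, rfl⟩, hn⟩
    have h2 : ∀ m, x * sPow (z*x) m = sPow (x*z) m * x := by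
      intro m; induction m with
      | zero => show x * (z*x) = (x*z)*x; rw [mul_assoc]
      | succ m ih =>
        show x * (sPow (z*x) m * (z*x)) = (sPow (x*z) m * (x*z)) * x
        rw [← mul_assoc, ih]
        simp [mul_assoc]
    calc x ≤ x * sPow (z*x) n := h1
    _ = sPow (x*z) n * x := h2 n
    _ = (x*z) * x := by rw [sPow_idem_eq he n]
/-! ### the word relation for the identity alphabet -/

abbrev Pr (u v : List S) : Prop := LeSigma ((· ≤ ·) : S → S → Prop) (id : S → S) u v

lemma pr_refl : ∀ l : List S, Pr l l := by
  intro l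
  induction l with
  | nil => exact LeSigma.nil
  | cons a t ih =>
    have := LeSigma.cons (le := ((· ≤ ·) : S → S → Prop)) (σ := (id : S → S))
      (a := a) (b := a) (v := []) (u := t) (w := t) (le_refl a) ih
    simpa using this

lemma pr_append {u₁ v₁ u₂ v₂ : List S} (h1 : Pr u₁ v₁) (h2 : Pr u₂ v₂) :
    Pr (u₁ ++ u₂) (v₁ ++ v₂) := by
  induction h1 with
  | nil => simpa using h2
  | cons hab hrest ih =>
    rename_i a b v u w
    show Pr (a :: (u ++ u₂)) ((b :: (v ++ w)) ++ v₂)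
    have : (b :: (v ++ w)) ++ v₂ = b :: (v ++ (w ++ v₂)) := by simp
    rw [this]
    exact LeSigma.cons hab ih

lemma pr_nil_left {v : List S} (h : Pr [] v) : v = [] := by cases h; rfl

lemma pr_nil_right {u : List S} (h : Pr u []) : u = [] := by
  cases h with
  | nil => rfl

lemma pr_split : ∀ (x₁ x₂ w : List S), Pr (x₁ ++ x₂) w →
    ∃ w₁ w₂, w = w₁ ++ w₂ ∧ Pr x₁ w₁ ∧ Pr x₂ w₂ := by
  intro x₁
  induction x₁ with
  | nil => intro x₂ w h; exact ⟨[], w, rfl, LeSigma.nil, by simpa using h⟩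
  | cons c t ih =>
    intro x₂ w h
    have h' : Pr (c :: (t ++ x₂)) w := by simpa using h
    cases h' with
    | cons hcb hrest =>
      rename_i b v ww
      obtain ⟨w₁, w₂, rfl, hw₁, hw₂⟩ := ih x₂ ww hrest
      refine ⟨b :: (v ++ w₁), w₂, by simp, ?_, hw₂⟩
      exact LeSigma.cons hcb hw₁

/-- comparision on `WithOne S` induced by the order -/
def vle : WithOne S → WithOne S → Prop := fun a b =>
  (a = 1 ∧ b = 1) ∨ (∃ x y : S, a = ↑x ∧ b = ↑y ∧ x ≤ y)

lemma vle_mul (hst : Stable ((· ≤ ·) : S → S → Prop)) {a b c d : WithOne S}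
    (h1 : vle a b) (h2 : vle c d) : vle (a * c) (b * d) := by
  rcases h1 with ⟨rfl, rfl⟩ | ⟨x, y, rfl, rfl, hxy⟩ <;>
    rcases h2 with ⟨rfl, rfl⟩ | ⟨x', y', rfl, rfl, hxy'⟩
  · exact Or.inl ⟨by simp, by simp⟩
  · exact Or.inr ⟨x', y', by simp, by simp, hxy'⟩
  · exact Or.inr ⟨x, y, by simp, by simp, hxy⟩
  · exact Or.inr ⟨x * x', y * y', by simp, by simp, mul_le_mul'' hst hxy hxy'⟩

lemma pr_vle (hst : Stable ((· ≤ ·) : S → S → Prop)) {u v : List S} (h : Pr u v) :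
    vle (val u) (val v) := by
  induction h with
  | nil => exact Or.inl ⟨rfl, rfl⟩
  | cons hab hrest ih =>
    rename_i a b vv u w
    have h1 : vle (val [a]) (val (b :: vv)) := by
      refine Or.inr ⟨a, wordProd id b vv, by simp, (coe_wordProd b vv).symm, hab⟩
    have := vle_mul hst h1 ih
    simpa [mul_assoc] using this

lemma pr_head_le (hst : Stable ((· ≤ ·) : S → S → Prop)) {b : S} {v W : List S}
    (h : Pr (b :: v) W) : ∃ c r, W = c :: r ∧ wordProd id b v ≤ wordProd id c r := by
  have hv := pr_vle hst h
  rcases hv with ⟨h1, _⟩ | ⟨x, y, hx, hy, hxy⟩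
  · exact absurd h1 (val_cons_ne_one v b)
  · cases W with
    | nil => simp at hy
    | cons c r =>
      refine ⟨c, r, rfl, ?_⟩
      have hx' : (↑(wordProd id b v) : WithOne S) = ↑x := by rw [coe_wordProd]; exact hx
      have hy' : (↑(wordProd id c r) : WithOne S) = ↑y := by rw [coe_wordProd]; exact hy
      rw [WithOne.coe_inj] at hx' hy'
      rw [hx', hy']; exact hxy

lemma pr_trans (hst : Stable ((· ≤ ·) : S → S → Prop)) :
    ∀ {u v w : List S}, Pr u v → Pr v w → Pr u w := by
  intro u v w h1
  induction h1 generalizing w with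
  | nil => intro h2; exact h2
  | cons hab hrest ih =>
    rename_i a b vv uu ww
    intro h2
    obtain ⟨W₁, W₀, rfl, hW₁, hW₀⟩ := pr_split (b :: vv) ww _ h2
    obtain ⟨c, r, rfl, hle⟩ := pr_head_le hst hW₁
    have : Pr (a :: uu) (c :: (r ++ W₀)) :=
      LeSigma.cons (le_trans hab hle) (ih hW₀)
    simpa using this

lemma pr_single {x y : S} (h : x ≤ y) : Pr [x] [y] := by
  have := LeSigma.cons (le := ((· ≤ ·) : S → S → Prop)) (σ := (id : S → S))
    (a := x) (b := y) (v := []) (u := []) (w := []) (by simpa [wordProd] using h) LeSigma.nil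
  simpa using this

/-- Right absorption: extend the last block by a word of idempotent value
with an appropriate link. -/
lemma pr_extendR (hst : Stable ((· ≤ ·) : S → S → Prop))
    (hid : ∀ x y e : S, IsIdemPow (y * x) e → x ≤ x * e)
    {u w g : List S} {e : S} (h : Pr u w) (hw : w ≠ [])
    (hg : val g = ↑e) (he : e * e = e) (hlink : ∃ y : WithOne S, (↑e : WithOne S) = y * val w) :
    Pr u (w ++ g) := by
  induction h with
  | nil => exact absurd rfl hw
  | cons hab hrest ih =>
    rename_i a b vv uu ww
    by_cases hww : ww = []
    · subst hww
      have huu : uu = [] := pr_nil_right hrest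
      subst huu
      -- the single block b :: vv absorbs g
      obtain ⟨y, hy⟩ := hlink
      have hvw : val (b :: (vv ++ [])) = ↑(wordProd id b vv) := by
        rw [← coe_wordProd]; simp
      have hlink' : e = wordProd id b vv ∨ ∃ y' : S, e = y' * wordProd id b vv := by
        rw [hvw] at hy
        rcases withOne_cases y with hy1 | ⟨y', hy'⟩
        · left
          rw [hy1] at hy; rw [one_mul] at hy; exact WithOne.coe_inj.mp hy
        · right
          refine ⟨y', ?_⟩
          rw [hy'] at hy
          rw [← WithOne.coe_mul] at hy
          exact WithOne.coe_inj.mp hy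
      have hxe : wordProd id b vv ≤ wordProd id b vv * e := absorbR hid he hlink'
      have hble : a ≤ wordProd id b (vv ++ g) := by
        have hcoe : (↑(wordProd id b (vv ++ g)) : WithOne S) = ↑(wordProd id b vv * e) := by
          rw [coe_wordProd, WithOne.coe_mul, coe_wordProd]
          show val (b :: (vv ++ g)) = val (b :: vv) * ↑e
          rw [← hg]; simp [mul_assoc]
        have : wordProd id b (vv ++ g) = wordProd id b vv * e := WithOne.coe_inj.mp hcoe
        rw [this]
        exact le_trans hab hxe
      have : Pr [a] (b :: ((vv ++ g) ++ [])) := LeSigma.cons hble LeSigma.nil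
      simpa using this
    · have hlink₂ : ∃ y : WithOne S, (↑e : WithOne S) = y * val ww := by
        obtain ⟨y, hy⟩ := hlink
        refine ⟨y * val (b :: vv), ?_⟩
        rw [hy]
        have : val (b :: (vv ++ ww)) = val (b :: vv) * val ww := by simp [mul_assoc]
        rw [this, mul_assoc]
      have := LeSigma.cons hab (ih hww hlink₂)
      simpa using this

/-- Left absorption: prepend a word of idempotent value with an appropriate link. -/
lemma pr_extendL (hst : Stable ((· ≤ ·) : S → S → Prop))
    (hid : ∀ x y e : S, IsIdemPow (y * x) e → x ≤ x * e)
    {u w g : List S} {e : S} (h : Pr u w) (hw : w ≠ [])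
    (hg : val g = ↑e) (he : e * e = e) (hlink : ∃ y : WithOne S, (↑e : WithOne S) = val w * y) :
    Pr u (g ++ w) := by
  cases h with
  | nil => exact absurd rfl hw
  | cons hab hrest =>
    rename_i a b vv uu ww
    cases g with
    | nil => simp at hg
    | cons g₀ g' =>
      obtain ⟨y, hy⟩ := hlink
      set x := wordProd id b vv with hx
      have hvw : val (b :: (vv ++ ww)) = ↑x * val ww := by
        rw [hx, coe_wordProd]; simp [mul_assoc]
      have hlink' : e = x ∨ ∃ z : S, e = x * z := by
        rw [hvw, mul_assoc] at hy
        rcases withOne_cases (val ww * y) with h1 | ⟨z, h1⟩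
        · left; rw [h1, mul_one] at hy; exact WithOne.coe_inj.mp hy
        · right; exact ⟨z, by rw [h1, ← WithOne.coe_mul] at hy; exact WithOne.coe_inj.mp hy⟩
      have hxe : x ≤ e * x := absorbL hid he hlink'
      have hble : a ≤ wordProd id g₀ (g' ++ (b :: vv)) := by
        have hcoe : (↑(wordProd id g₀ (g' ++ (b :: vv))) : WithOne S) = ↑(e * x) := by
          rw [coe_wordProd, WithOne.coe_mul]
          show val (g₀ :: (g' ++ (b :: vv))) = ↑e * ↑x
          have : val (g₀ :: (g' ++ (b :: vv))) = val (g₀ :: g') * val (b :: vv) := by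
            simp [mul_assoc]
          rw [this, hg, hx, coe_wordProd]
        have := WithOne.coe_inj.mp hcoe
        rw [this]
        exact le_trans hab hxe
      have hfin : Pr (a :: uu) (g₀ :: ((g' ++ (b :: vv)) ++ ww)) := LeSigma.cons hble hrest
      have hsh : (g₀ :: g') ++ (b :: (vv ++ ww)) = g₀ :: ((g' ++ (b :: vv)) ++ ww) := by simp
      rw [hsh]
      exact hfin

/-! ### pwo utilities -/

lemma isPre_of {β : Type*} (r : β → β → Prop) [Std.Refl r] [IsTrans β r] : IsPreorder β r :=
  { refl := Std.Refl.refl, trans := IsTrans.trans }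

lemma pwo_of_map {β γ : Type*} {s : Set β} {t : Set γ} {r : β → β → Prop} {rb : γ → γ → Prop}
    (f : β → γ) (hmem : ∀ a ∈ s, f a ∈ t)
    (himp : ∀ a b, a ∈ s → b ∈ s → rb (f a) (f b) → r a b)
    (ht : t.PartiallyWellOrderedOn rb) : s.PartiallyWellOrderedOn r := by
  rw [Set.partiallyWellOrderedOn_iff_exists_lt]
  intro g hg
  obtain ⟨m, n, hmn, hr⟩ := ht.exists_lt (f := fun n => f (g n)) (fun n => hmem _ (hg n))
  exact ⟨m, n, hmn, himp _ _ (hg m) (hg n) hr⟩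

lemma pwo_imp {β : Type*} {s : Set β} {r r' : β → β → Prop}
    (hs : s.PartiallyWellOrderedOn r) (h : ∀ a b, a ∈ s → b ∈ s → r a b → r' a b) :
    s.PartiallyWellOrderedOn r' := by
  rw [Set.partiallyWellOrderedOn_iff_exists_lt]
  intro g hg
  obtain ⟨m, n, hmn, hr⟩ := hs.exists_lt hg
  exact ⟨m, n, hmn, h _ _ (hg m) (hg n) hr⟩

lemma pwo_and_eq {β : Type*} {s : Set β} {r : β → β → Prop}
    (hrefl : Reflexive r) (htrans : Transitive r)
    (hs : s.PartiallyWellOrderedOn r) {D : Type*} [Finite D] (d : β → D) :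
    s.PartiallyWellOrderedOn (fun a b => r a b ∧ d a = d b) := by
  rw [Set.partiallyWellOrderedOn_iff_exists_lt]
  intro g hg
  haveI : IsRefl _ r := ⟨hrefl⟩
  haveI : IsTrans _ r := ⟨fun _ _ _ hab hbc => htrans hab hbc⟩
  haveI := isPre_of r
  obtain ⟨gm, hgm⟩ := hs.exists_monotone_subseq hg
  obtain ⟨i, j, hij, hd⟩ := Finite.exists_ne_map_eq_of_infinite (fun n => d (g (gm n)))
  rcases lt_or_gt_of_ne hij with h | h
  · exact ⟨gm i, gm j, gm.strictMono h, hgm i j h.le, hd⟩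
  · exact ⟨gm j, gm i, gm.strictMono h, hgm j i h.le, hd.symm⟩

lemma pwo_finite_eq {β : Type*} {s : Set β} (hs : s.Finite) :
    s.PartiallyWellOrderedOn (· = ·) := by
  rw [Set.partiallyWellOrderedOn_iff_exists_lt]
  intro g hg
  haveI := hs.to_subtype
  obtain ⟨i, j, hij, hd⟩ :=
    Finite.exists_ne_map_eq_of_infinite (fun n => (⟨g n, hg n⟩ : s))
  rcases lt_or_gt_of_ne hij with h | h
  · exact ⟨i, j, h, congrArg Subtype.val hd⟩
  · exact ⟨j, i, h, (congrArg Subtype.val hd).symm⟩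

/-! ### generated subsemigroup -/

inductive InN (V : Set S) : S → Prop
  | base {x : S} : x ∈ V → InN V x
  | mul {a b : S} : InN V a → InN V b → InN V (a * b)

lemma InN.sPowMem {V : Set S} {x : S} (hx : InN V x) : ∀ n, InN V (sPow x n) := by
  intro n; induction n with
  | zero => exact hx
  | succ n ih => exact ih.mul hx

lemma InN.mono {V W : Set S} (h : V ⊆ W) {x : S} (hx : InN V x) : InN W x := by
  induction hx with
  | base hb => exact InN.base (h hb)
  | mul _ _ ih₁ ih₂ => exact ih₁.mul ih₂

lemma InN_subset_of_closed {V T : Set S} (hVT : V ⊆ T)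
    (hT : ∀ a ∈ T, ∀ b ∈ T, a * b ∈ T) {x : S} (hx : InN V x) : x ∈ T := by
  induction hx with
  | base hb => exact hVT hb
  | mul ha hb iha ihb => exact hT _ iha _ ihb

/-! ### stabilizers are right identities, under right divisibility -/

lemma stab_rightid {V : Set S}
    (hrd : ∀ n, InN V n → ∀ ν, InN V ν → ∃ u, InN V u ∧ n = u * ν)
    {γ z : S} (hγ : InN V γ) (hz : InN V z) (heq : γ * z = γ) :
    ∀ x, InN V x → x * z = x := by
  -- right cancellation
  have hcan : ∀ n, InN V n → ∀ a b, InN V a → InN V b → a * n = b * n → a = b := by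
    intro n hn a b ha hb hab
    haveI : Finite {x // InN V x} := (Set.toFinite {x | InN V x}).to_subtype
    set ρ : {x // InN V x} → {x // InN V x} := fun x => ⟨x.1 * n, x.2.mul hn⟩ with hρ
    have hsurj : Function.Surjective ρ := by
      intro y
      obtain ⟨u, hu, he⟩ := hrd y.1 y.2 n hn
      exact ⟨⟨u, hu⟩, Subtype.ext he.symm⟩
    have hinj : Function.Injective ρ := Finite.injective_iff_surjective.mpr hsurj
    have h5 : ρ ⟨a, ha⟩ = ρ ⟨b, hb⟩ := Subtype.ext hab
    have := hinj h5
    exact congrArg Subtype.val this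
  -- idempotents are right identities
  have hidem : ∀ e, InN V e → e * e = e → ∀ x, InN V x → x * e = x := by
    intro e he hee x hx
    refine hcan e he (x*e) x (hx.mul he) hx ?_
    rw [mul_assoc, hee]
  obtain ⟨n, hfn⟩ := exists_idem_sPow z
  set f := sPow z n with hf
  have hfmem : InN V f := hz.sPowMem n
  have hfrid : ∀ x, InN V x → x * f = x := hidem f hfmem hfn
  -- powers of γ are stabilized by z
  have hpow : ∀ k, sPow γ k * z = sPow γ k := by
    intro k; induction k with
    | zero => exact heq
    | succ k ih =>
      show sPow γ k * γ * z = sPow γ k * γ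
      rw [mul_assoc, heq]
  have hγpow : ∀ k, InN V (sPow γ k) := hγ.sPowMem
  -- a := f * γ
  set a := f * γ with ha
  have hamem : InN V a := hfmem.mul hγ
  have hapow : ∀ k, sPow a k = f * sPow γ k := by
    intro k; induction k with
    | zero => rfl
    | succ k ih =>
      show sPow a k * a = f * (sPow γ k * γ)
      rw [ih, ha, ← mul_assoc, mul_assoc f (sPow γ k) f, hfrid _ (hγpow k), mul_assoc]
  obtain ⟨m, hEm⟩ := exists_idem_sPow a
  set E := sPow a m with hE
  have hEmem : InN V E := hamem.sPowMem m
  have hErid : ∀ x, InN V x → x * E = x := hidem E hEmem hEm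
  have hEf : E = f := by
    have h1 : f * E = f := hErid f hfmem
    have h2 : f * E = E := by
      rw [hE, hapow m, ← mul_assoc, hfrid f hfmem]
    rw [← h1, h2]
  have hEz : E * z = E := by
    rw [hE, hapow m, mul_assoc, hpow m]
  have hfz : f * z = f := by rw [← hEf, hEz]
  intro x hx
  calc x * z = (x * f) * z := by rw [hfrid x hx]
  _ = x * (f * z) := by rw [mul_assoc]
  _ = x * f := by rw [hfz]
  _ = x := hfrid x hx

/-! ### flattening words of an abstract alphabet -/

section Alph
variable {α : Type}

def FL (flat : α → List S) (l : List α) : List S := (l.map flat).flatten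

@[simp] lemma FL_nil (flat : α → List S) : FL flat ([] : List α) = [] := rfl

@[simp] lemma FL_cons (flat : α → List S) (x : α) (l : List α) :
    FL flat (x :: l) = flat x ++ FL flat l := rfl

@[simp] lemma FL_append (flat : α → List S) (l₁ l₂ : List α) :
    FL flat (l₁ ++ l₂) = FL flat l₁ ++ FL flat l₂ := by
  simp [FL]

/-- the conclusion relation of the master theorem -/
def Rr (flat : α → List S) : List α → List α → Prop :=
  fun l₁ l₂ => Pr (FL flat l₁) (FL flat l₂) ∧ val (FL flat l₁) = val (FL flat l₂)

lemma Rr_refl (flat : α → List S) : Reflexive (Rr flat) :=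
  fun l => ⟨pr_refl _, rfl⟩

lemma Rr_trans (hst : Stable ((· ≤ ·) : S → S → Prop)) (flat : α → List S) :
    Transitive (Rr flat) :=
  fun _ _ _ h1 h2 => ⟨pr_trans hst h1.1 h2.1, h1.2.trans h2.2⟩

def Vset (flat : α → List S) (X : Set α) : Set S := {s | ∃ a ∈ X, val (flat a) = ↑s}

lemma FL_eq_nil {flat : α → List S} {X : Set α} (hne : ∀ a ∈ X, flat a ≠ [])
    {l : List α} (hl : ∀ a ∈ l, a ∈ X) (h : FL flat l = []) : l = [] := by
  cases l with
  | nil => rfl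
  | cons a t =>
    exfalso
    have : flat a ++ FL flat t = [] := h
    have h2 : flat a = [] := by
      rcases List.append_eq_nil_iff.mp this with ⟨h2, _⟩
      exact h2
    exact hne a (hl a (List.mem_cons_self)) h2

lemma FL_ne_nil {flat : α → List S} {X : Set α} (hne : ∀ a ∈ X, flat a ≠ [])
    {l : List α} (hl : ∀ a ∈ l, a ∈ X) (h : l ≠ []) : FL flat l ≠ [] := by
  intro hc; exact h (FL_eq_nil hne hl hc)

lemma valFL_mem {flat : α → List S} {X : Set α} (hne : ∀ a ∈ X, flat a ≠ []) :
    ∀ l : List α, (∀ a ∈ l, a ∈ X) → l ≠ [] →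
      ∃ z, InN (Vset flat X) z ∧ val (FL flat l) = ↑z := by
  intro l
  induction l with
  | nil => intro _ h; exact absurd rfl h
  | cons x t ih =>
    intro hl _
    have hxX : x ∈ X := hl x (List.mem_cons_self)
    obtain ⟨s, hs⟩ := val_exists_coe (hne x hxX)
    have hsV : InN (Vset flat X) s := InN.base ⟨x, hxX, hs⟩
    by_cases ht : t = []
    · subst ht
      exact ⟨s, hsV, by simpa using hs⟩
    · obtain ⟨z, hz, hvz⟩ := ih (fun a ha => hl a (List.mem_cons_of_mem _ ha)) ht
      refine ⟨s * z, hsV.mul hz, ?_⟩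
      rw [FL_cons, val_append, hs, hvz, WithOne.coe_mul]

/-! ### prefix-value encodings -/

def enc (flat : α → List S) : WithOne S → List α → List (α × WithOne S)
  | _, [] => []
  | γ, x :: l => (x, γ) :: enc flat (γ * val (flat x)) l

@[simp] lemma enc_nil (flat : α → List S) (γ : WithOne S) : enc flat γ [] = [] := rfl

@[simp] lemma enc_cons (flat : α → List S) (γ : WithOne S) (x : α) (l : List α) :
    enc flat γ (x :: l) = (x, γ) :: enc flat (γ * val (flat x)) l := rfl

lemma enc_fst_mem {flat : α → List S} :
    ∀ {γ : WithOne S} {l : List α} {p : α × WithOne S}, p ∈ enc flat γ l → p.1 ∈ l := by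
  intro γ l
  induction l generalizing γ with
  | nil => intro p hp; simp at hp
  | cons x t ih =>
    intro p hp
    rcases List.mem_cons.mp hp with h | h
    · subst h; exact List.mem_cons_self
    · exact List.mem_cons_of_mem _ (ih h)

lemma enc_append_split {flat : α → List S} :
    ∀ {A B : List (α × WithOne S)} {γ : WithOne S} {l : List α},
      enc flat γ l = A ++ B →
      ∃ la lb, l = la ++ lb ∧ A = enc flat γ la ∧
        B = enc flat (γ * val (FL flat la)) lb := by
  intro A
  induction A with
  | nil =>
    intro B γ l h
    exact ⟨[], l, rfl, rfl, by simpa using h.symm⟩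
  | cons a A ih =>
    intro B γ l h
    cases l with
    | nil => simp at h
    | cons x t =>
      rw [enc_cons] at h
      have h1 : (x, γ) = a ∧ enc flat (γ * val (flat x)) t = A ++ B := by
        constructor
        · exact (List.cons.injEq _ _ _ _ ▸ h).1
        · exact (List.cons.injEq _ _ _ _ ▸ h).2
      obtain ⟨la, lb, rfl, hA, hB⟩ := ih h1.2
      refine ⟨x :: la, lb, rfl, ?_, ?_⟩
      · rw [enc_cons, ← h1.1, hA]
      · rw [hB]
        congr 1
        rw [FL_cons, val_append, mul_assoc]

lemma slf_cons_split {β : Type*} {r : β → β → Prop} {p : β} {L₁ : List β} :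
    ∀ {L₂ : List β}, List.SublistForall₂ r (p :: L₁) L₂ →
      ∃ g y t, L₂ = g ++ y :: t ∧ r p y ∧ List.SublistForall₂ r L₁ t := by
  intro L₂
  induction L₂ with
  | nil => intro h; cases h
  | cons b l₂ ih =>
    intro h
    cases h with
    | cons hr hrest => exact ⟨[], b, l₂, rfl, hr, hrest⟩
    | cons_right h' =>
      obtain ⟨g, y, t, rfl, hy, ht⟩ := ih h'
      exact ⟨b :: g, y, t, rfl, hy, ht⟩

end Alph

/-! ### Case C2 : right-divisible value semigroup -/

section C2
variable {α : Type}

lemma c2rec (hst : Stable ((· ≤ ·) : S → S → Prop))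
    (hid : ∀ x y e : S, IsIdemPow (y * x) e → x ≤ x * e)
    (flat : α → List S) (X : Set α) (Q : α → α → Prop)
    (hne : ∀ a ∈ X, flat a ≠ [])
    (hQle : ∀ a b, Q a b → Pr (flat a) (flat b) ∧ val (flat a) = val (flat b))
    (hrd : ∀ n, InN (Vset flat X) n → ∀ ν, InN (Vset flat X) ν →
      ∃ u, InN (Vset flat X) u ∧ n = u * ν) :
    ∀ t₁ t₂ : List α, ∀ (γn : S) (u w : List S),
      InN (Vset flat X) γn → (∀ a ∈ t₁, a ∈ X) → (∀ a ∈ t₂, a ∈ X) →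
      List.SublistForall₂ (fun p q : α × WithOne S => Q p.1 q.1 ∧ p.2 = q.2)
        (enc flat (↑γn) t₁) (enc flat (↑γn) t₂) →
      ((↑γn * val (FL flat t₂) : WithOne S) = ↑γn * val (FL flat t₁)) →
      Pr u w → w ≠ [] → (∃ ν, InN (Vset flat X) ν ∧ val w = ↑ν) →
      Pr (u ++ FL flat t₁) (w ++ FL flat t₂) := by
  intro t₁
  induction t₁ with
  | nil =>
    intro t₂ γn u w hγ _ ht₂X _ hval hPr hwne hwval
    by_cases ht₂ : t₂ = []
    · subst ht₂; simpa using hPr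
    · obtain ⟨z, hz, hvz⟩ := valFL_mem hne t₂ ht₂X ht₂
      have hγz : γn * z = γn := by
        rw [hvz] at hval
        simp only [FL_nil, val_nil, mul_one] at hval
        rw [← WithOne.coe_mul] at hval
        exact WithOne.coe_inj.mp hval
      have hstab := stab_rightid hrd hγ hz hγz
      have hzz : z * z = z := hstab z hz
      obtain ⟨ν, hν, hwv⟩ := hwval
      obtain ⟨u', hu', he'⟩ := hrd z hz ν hν
      have hlink : ∃ y : WithOne S, (↑z : WithOne S) = y * val w :=
        ⟨↑u', by rw [hwv, ← WithOne.coe_mul, ← he']⟩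
      have := pr_extendR hst hid hPr hwne hvz hzz hlink
      simpa using this
  | cons x t₁ ih =>
    intro t₂ γn u w hγ ht₁X ht₂X hslf hval hPr hwne hwval
    rw [enc_cons] at hslf
    obtain ⟨g', p, rest', hL₂, hRp, hslfrest⟩ := slf_cons_split hslf
    obtain ⟨ga, lb, rfl, hA, hB⟩ := enc_append_split hL₂
    cases lb with
    | nil => simp at hB
    | cons y t₂' =>
      rw [enc_cons] at hB
      have hp : p = (y, ↑γn * val (FL flat ga)) := by
        injection hB
      have hrest' : rest' = enc flat ((↑γn * val (FL flat ga)) * val (flat y)) t₂' := by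
        injection hB
      have hQxy : Q x y := by rw [hp] at hRp; exact hRp.1
      have hstab0 : (↑γn : WithOne S) * val (FL flat ga) = ↑γn := by
        rw [hp] at hRp; exact hRp.2.symm
      -- memberships
      have hxX : x ∈ X := ht₁X x (List.mem_cons_self)
      have ht₁X' : ∀ a ∈ t₁, a ∈ X := fun a ha => ht₁X a (List.mem_cons_of_mem _ ha)
      have hgaX : ∀ a ∈ ga, a ∈ X := fun a ha => ht₂X a (by simp [ha])
      have hyX : y ∈ X := ht₂X y (by simp)
      have ht₂X' : ∀ a ∈ t₂', a ∈ X := fun a ha => ht₂X a (by simp [ha])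
      -- value of x
      obtain ⟨ξ, hξ⟩ := val_exists_coe (hne x hxX)
      have hξV : InN (Vset flat X) ξ := InN.base ⟨x, hxX, hξ⟩
      have hvalxy : val (flat y) = ↑ξ := by rw [← hξ]; exact (hQle x y hQxy).2.symm
      -- absorb the gap into w
      obtain ⟨ν, hν, hwv⟩ := hwval
      have habs : Pr u (w ++ FL flat ga) ∧ w ++ FL flat ga ≠ [] ∧
          ∃ ν₂, InN (Vset flat X) ν₂ ∧ val (w ++ FL flat ga) = ↑ν₂ := by
        by_cases hga : ga = []
        · subst hga
          exact ⟨by simpa using hPr, by simpa using hwne, ⟨ν, hν, by simpa using hwv⟩⟩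
        · obtain ⟨z, hz, hvz⟩ := valFL_mem hne ga hgaX hga
          have hγz : γn * z = γn := by
            rw [hvz, ← WithOne.coe_mul] at hstab0
            exact WithOne.coe_inj.mp hstab0
          have hstab := stab_rightid hrd hγ hz hγz
          have hzz : z * z = z := hstab z hz
          obtain ⟨u', hu', he'⟩ := hrd z hz ν hν
          have hlink : ∃ yy : WithOne S, (↑z : WithOne S) = yy * val w :=
            ⟨↑u', by rw [hwv, ← WithOne.coe_mul, ← he']⟩
          refine ⟨pr_extendR hst hid hPr hwne hvz hzz hlink, by simp [hwne], ?_⟩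
          exact ⟨ν * z, hν.mul hz, by rw [val_append, hwv, hvz, WithOne.coe_mul]⟩
      obtain ⟨hPr₂, hw₂ne, ν₂, hν₂, hw₂v⟩ := habs
      -- rewrite the remaining sublist relation
      have henc1 : (↑γn : WithOne S) * val (flat x) = ↑(γn * ξ) := by
        rw [hξ, WithOne.coe_mul]
      have henc2 : ((↑γn : WithOne S) * val (FL flat ga)) * val (flat y) = ↑(γn * ξ) := by
        rw [hstab0, hvalxy, WithOne.coe_mul]
      rw [hrest', henc2] at hslfrest
      rw [henc1] at hslfrest
      -- totals
      have hval' : (↑(γn * ξ) : WithOne S) * val (FL flat t₂') =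
          ↑(γn * ξ) * val (FL flat t₁) := by
        have e2 : val (FL flat (ga ++ y :: t₂')) =
            val (FL flat ga) * (val (flat y) * val (FL flat t₂')) := by
          simp [mul_assoc]
        rw [e2] at hval
        have e3 : (↑γn : WithOne S) * (val (FL flat ga) * (val (flat y) * val (FL flat t₂')))
            = ↑(γn * ξ) * val (FL flat t₂') := by
          rw [← mul_assoc, hstab0, ← mul_assoc, hvalxy, ← WithOne.coe_mul]
        have e4 : (↑γn : WithOne S) * val (FL flat (x :: t₁)) =
            ↑(γn * ξ) * val (FL flat t₁) := by
          rw [FL_cons, val_append, ← mul_assoc, hξ, WithOne.coe_mul]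
        rw [← e3, ← e4]
        exact hval
      -- recurse
      have hrec := ih t₂' (γn * ξ) (u ++ flat x) ((w ++ FL flat ga) ++ flat y)
        (hγ.mul hξV) ht₁X' ht₂X' hslfrest hval'
        (pr_append hPr₂ (hQle x y hQxy).1)
        (fun hc => hne y hyX (List.append_eq_nil_iff.mp hc).2)
        ⟨ν₂ * ξ, hν₂.mul hξV, by rw [val_append, hw₂v, hvalxy, WithOne.coe_mul]⟩
      have hgoal : Pr ((u ++ flat x) ++ FL flat t₁)
          (((w ++ FL flat ga) ++ flat y) ++ FL flat t₂') := hrec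
      have hre1 : (u ++ flat x) ++ FL flat t₁ = u ++ FL flat (x :: t₁) := by simp
      have hre2 : ((w ++ FL flat ga) ++ flat y) ++ FL flat t₂' =
          w ++ FL flat (ga ++ y :: t₂') := by simp
      rw [hre1, hre2] at hgoal
      exact hgoal
end C2

section C2b
variable {α : Type}

lemma c2top (hst : Stable ((· ≤ ·) : S → S → Prop))
    (hid : ∀ x y e : S, IsIdemPow (y * x) e → x ≤ x * e)
    (flat : α → List S) (X : Set α) (Q : α → α → Prop)
    (hne : ∀ a ∈ X, flat a ≠ [])
    (hQle : ∀ a b, Q a b → Pr (flat a) (flat b) ∧ val (flat a) = val (flat b))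
    (hrd : ∀ n, InN (Vset flat X) n → ∀ ν, InN (Vset flat X) ν →
      ∃ u, InN (Vset flat X) u ∧ n = u * ν) :
    ∀ l₁ l₂ : List α, (∀ a ∈ l₁, a ∈ X) → (∀ a ∈ l₂, a ∈ X) →
      List.SublistForall₂ (fun p q : α × WithOne S => Q p.1 q.1 ∧ p.2 = q.2)
        (enc flat 1 l₁) (enc flat 1 l₂) →
      val (FL flat l₁) = val (FL flat l₂) →
      Pr (FL flat l₁) (FL flat l₂) := by
  intro l₁ l₂ hl₁ hl₂ hslf hval
  cases l₁ with
  | nil =>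
    have h2 : val (FL flat l₂) = 1 := by simpa using hval.symm
    have h3 : FL flat l₂ = [] := val_eq_one_iff.mp h2
    rw [h3]
    exact LeSigma.nil
  | cons x t₁ =>
    rw [enc_cons] at hslf
    obtain ⟨g', p, rest', hL₂, hRp, hslfrest⟩ := slf_cons_split hslf
    obtain ⟨ga, lb, rfl, hA, hB⟩ := enc_append_split hL₂
    cases lb with
    | nil => simp at hB
    | cons y t₂' =>
      rw [enc_cons] at hB
      have hp : p = (y, (1 : WithOne S) * val (FL flat ga)) := by injection hB
      have hrest' : rest' = enc flat (((1 : WithOne S) * val (FL flat ga)) * val (flat y)) t₂' := by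
        injection hB
      have hQxy : Q x y := by rw [hp] at hRp; exact hRp.1
      have hstab0 : (1 : WithOne S) = 1 * val (FL flat ga) := by
        rw [hp] at hRp; exact hRp.2
      have hga1 : val (FL flat ga) = 1 := by
        rw [one_mul] at hstab0; exact hstab0.symm
      have hgaFL : FL flat ga = [] := val_eq_one_iff.mp hga1
      -- memberships
      have hxX : x ∈ X := hl₁ x (List.mem_cons_self)
      have ht₁X : ∀ a ∈ t₁, a ∈ X := fun a ha => hl₁ a (List.mem_cons_of_mem _ ha)
      have hyX : y ∈ X := hl₂ y (by simp)
      have ht₂X' : ∀ a ∈ t₂', a ∈ X := fun a ha => hl₂ a (by simp [ha])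
      obtain ⟨ξ, hξ⟩ := val_exists_coe (hne x hxX)
      have hξV : InN (Vset flat X) ξ := InN.base ⟨x, hxX, hξ⟩
      have hvalxy : val (flat y) = ↑ξ := by rw [← hξ]; exact (hQle x y hQxy).2.symm
      -- rewrite sublist
      have henc1 : (1 : WithOne S) * val (flat x) = ↑ξ := by rw [one_mul, hξ]
      have henc2 : ((1 : WithOne S) * val (FL flat ga)) * val (flat y) = ↑ξ := by
        rw [← hstab0, one_mul, hvalxy]
      rw [hrest', henc2, henc1] at hslfrest
      -- totals
      have hval' : (↑ξ : WithOne S) * val (FL flat t₂') = ↑ξ * val (FL flat t₁) := by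
        have e2 : val (FL flat (ga ++ y :: t₂')) = val (flat y) * val (FL flat t₂') := by
          rw [FL_append, FL_cons, val_append, val_append, hga1, one_mul]
        have e4 : val (FL flat (x :: t₁)) = ↑ξ * val (FL flat t₁) := by
          rw [FL_cons, val_append, hξ]
        rw [e2, e4, hvalxy] at hval
        exact hval.symm
      have hrec := c2rec hst hid flat X Q hne hQle hrd t₁ t₂' ξ (flat x) (flat y)
        hξV ht₁X ht₂X' hslfrest hval'
        (hQle x y hQxy).1 (hne y hyX) ⟨ξ, hξV, hvalxy⟩
      have hgoal : Pr (FL flat (x :: t₁)) (FL flat (ga ++ y :: t₂')) := by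
        rw [FL_cons, FL_append, hgaFL, FL_cons]
        simpa using hrec
      exact hgoal

lemma caseC2 (hst : Stable ((· ≤ ·) : S → S → Prop))
    (hid : ∀ x y e : S, IsIdemPow (y * x) e → x ≤ x * e)
    (flat : α → List S) (X : Set α) (Q : α → α → Prop)
    (hrefl : Reflexive Q) (htrans : Transitive Q)
    (hne : ∀ a ∈ X, flat a ≠ [])
    (hQpwo : X.PartiallyWellOrderedOn Q)
    (hQle : ∀ a b, Q a b → Pr (flat a) (flat b) ∧ val (flat a) = val (flat b))
    (hrd : ∀ n, InN (Vset flat X) n → ∀ ν, InN (Vset flat X) ν →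
      ∃ u, InN (Vset flat X) u ∧ n = u * ν) :
    {l : List α | ∀ a ∈ l, a ∈ X}.PartiallyWellOrderedOn (Rr flat) := by
  classical
  haveI : Finite (WithOne S) := by
    unfold WithOne
    infer_instance
  haveI : IsRefl α Q := ⟨hrefl⟩
  haveI : IsTrans α Q := ⟨fun _ _ _ h1 h2 => htrans h1 h2⟩
  set R2 : α × WithOne S → α × WithOne S → Prop := fun p q => Q p.1 q.1 ∧ p.2 = q.2 with hR2
  haveI : IsRefl (α × WithOne S) R2 := ⟨fun p => ⟨hrefl p.1, rfl⟩⟩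
  haveI : IsTrans (α × WithOne S) R2 :=
    ⟨fun _ _ _ h1 h2 => ⟨htrans h1.1 h2.1, h1.2.trans h2.2⟩⟩
  haveI := isPre_of Q
  haveI := isPre_of R2
  have pwoP : (X ×ˢ (Set.univ : Set (WithOne S))).PartiallyWellOrderedOn R2 := by
    have := hQpwo.prod (pwo_finite_eq (Set.finite_univ (α := WithOne S)))
    exact this
  have pwoL := Set.PartiallyWellOrderedOn.partiallyWellOrderedOn_sublistForall₂ R2 pwoP
  set r' : List α → List α → Prop :=
    fun l₁ l₂ => List.SublistForall₂ R2 (enc flat 1 l₁) (enc flat 1 l₂) with hr'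
  have pwor' : {l : List α | ∀ a ∈ l, a ∈ X}.PartiallyWellOrderedOn r' := by
    refine pwo_of_map (enc flat 1) ?_ (fun _ _ _ _ h => h) pwoL
    intro l hl
    intro pq hpq
    exact Set.mk_mem_prod (hl _ (enc_fst_mem hpq)) (Set.mem_univ _)
  have r'refl : Reflexive r' := fun l => List.SublistForall₂.is_refl.refl _
  have r'trans : Transitive r' := fun _ _ _ h1 h2 =>
    List.SublistForall₂.is_trans.trans _ _ _ h1 h2
  have pwo2 := pwo_and_eq r'refl r'trans pwor' (fun l => val (FL flat l))
  refine pwo_imp pwo2 ?_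
  intro l₁ l₂ h₁ h₂ hr
  exact ⟨c2top hst hid flat X Q hne hQle hrd l₁ l₂ h₁ h₂ hr.1 hr.2, hr.2⟩
end C2b

/-! ### Case C3 : all letters share a single value δ -/

section C3
variable {α : Type}

lemma slf_forall₂ {β : Type*} {r : β → β → Prop} {l₁ l₂ : List β}
    (h : List.SublistForall₂ r l₁ l₂) (hlen : l₁.length = l₂.length) :
    List.Forall₂ r l₁ l₂ := by
  obtain ⟨l, hf, hs⟩ := List.sublistForall₂_iff.mp h
  have h1 : l.length = l₁.length := (List.Forall₂.length_eq hf).symm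
  have h2 : l = l₂ := hs.eq_of_length (by omega)
  rwa [h2] at hf

lemma f2_trans {β : Type*} {r : β → β → Prop} (ht : Transitive r) :
    ∀ {l₁ l₂ l₃ : List β}, List.Forall₂ r l₁ l₂ → List.Forall₂ r l₂ l₃ →
      List.Forall₂ r l₁ l₃ := by
  intro l₁ l₂ l₃ h1
  induction h1 generalizing l₃ with
  | nil => intro h2; cases h2; exact List.Forall₂.nil
  | cons hab hrest ih =>
    intro h2
    cases h2 with
    | cons hbc hrest₂ => exact List.Forall₂.cons (ht hab hbc) (ih hrest₂)

lemma f2FL (hst : Stable ((· ≤ ·) : S → S → Prop)) (flat : α → List S) (Q : α → α → Prop)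
    (hQle : ∀ a b, Q a b → Pr (flat a) (flat b) ∧ val (flat a) = val (flat b)) :
    ∀ {l l' : List α}, List.Forall₂ Q l l' →
      Pr (FL flat l) (FL flat l') ∧ val (FL flat l) = val (FL flat l') := by
  intro l l' h
  induction h with
  | nil => exact ⟨LeSigma.nil, rfl⟩
  | cons hab hrest ih =>
    refine ⟨pr_append (hQle _ _ hab).1 ih.1, ?_⟩
    rename_i a b l₁ l₂
    rw [FL_cons, FL_cons, val_append, val_append, (hQle _ _ hab).2, ih.2]

lemma chunkval (flat : α → List S) {δ : S} :
    ∀ (l : List α) (m : ℕ), l.length = m + 1 → (∀ a ∈ l, val (flat a) = ↑δ) →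
      val (FL flat l) = ↑(sPow δ m) := by
  intro l
  induction l with
  | nil => intro m hm _; simp at hm
  | cons x t ih =>
    intro m hm hl
    have hx : val (flat x) = ↑δ := hl x (List.mem_cons_self)
    cases m with
    | zero =>
      have ht : t = [] := by
        have : t.length = 0 := by simpa using hm
        exact List.length_eq_zero_iff.mp this
      subst ht; simpa [sPow] using hx
    | succ m' =>
      have htlen : t.length = m' + 1 := by simpa using hm
      have := ih m' htlen (fun a ha => hl a (List.mem_cons_of_mem _ ha))
      rw [FL_cons, val_append, hx, this, ← WithOne.coe_mul, ← sPow_succ_left]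

lemma runval (flat : α → List S) {δ : S} {n₀ : ℕ}
    (hfidem : sPow δ n₀ * sPow δ n₀ = sPow δ n₀) :
    ∀ (cs : List (List α)), (∀ c ∈ cs, c.length = n₀ + 1 ∧ ∀ a ∈ c, val (flat a) = ↑δ) →
      cs ≠ [] → val (FL flat cs.flatten) = ↑(sPow δ n₀) := by
  intro cs
  induction cs with
  | nil => intro _ h; exact absurd rfl h
  | cons c cs ih =>
    intro hcs _
    have hc := hcs c (List.mem_cons_self)
    have hcval : val (FL flat c) = ↑(sPow δ n₀) :=
      chunkval flat c n₀ hc.1 hc.2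
    by_cases hcs0 : cs = []
    · subst hcs0; simpa using hcval
    · have := ih (fun a ha => hcs a (List.mem_cons_of_mem _ ha)) hcs0
      have hfl : FL flat ((c :: cs).flatten) = FL flat c ++ FL flat cs.flatten := by
        simp [FL]
      rw [hfl, val_append, hcval, this, ← WithOne.coe_mul, hfidem]

lemma sPow_mult_idem {δ : S} {n₀ : ℕ} (hfidem : sPow δ n₀ * sPow δ n₀ = sPow δ n₀) :
    ∀ m, sPow δ ((m+1) * (n₀+1) - 1) = sPow δ n₀ := by
  intro m
  induction m with
  | zero => simp
  | succ m ih =>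
    have harith : (m+2) * (n₀+1) - 1 = ((m+1)*(n₀+1) - 1) + n₀ + 1 := by
      have h1 : (m+2) * (n₀+1) = (m+1)*(n₀+1) + (n₀+1) := by ring
      have h2 : 0 < (m+1)*(n₀+1) := Nat.mul_pos (by omega) (by omega)
      omega
    rw [show m + 1 + 1 = m + 2 from rfl, harith, ← sPow_add, ih, hfidem]

lemma f_factorR {δ : S} {n₀ : ℕ} (hfidem : sPow δ n₀ * sPow δ n₀ = sPow δ n₀) (k : ℕ) :
    ∃ y : S, sPow δ n₀ = y * sPow δ k := by
  refine ⟨sPow δ (k*n₀ + 2*n₀), ?_⟩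
  have h1 := sPow_mult_idem hfidem (k+1)
  rw [show k + 1 + 1 = k + 2 from rfl] at h1
  rw [← h1, sPow_add]
  congr 1
  have hA : (k+2) * (n₀+1) = k*n₀ + k + 2*n₀ + 2 := by ring
  omega

lemma f_factorL {δ : S} {n₀ : ℕ} (hfidem : sPow δ n₀ * sPow δ n₀ = sPow δ n₀) (k : ℕ) :
    ∃ y : S, sPow δ n₀ = sPow δ k * y := by
  refine ⟨sPow δ (k*n₀ + 2*n₀), ?_⟩
  have h1 := sPow_mult_idem hfidem (k+1)
  rw [show k + 1 + 1 = k + 2 from rfl] at h1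
  rw [← h1, sPow_add]
  congr 1
  have hA : (k+2) * (n₀+1) = k*n₀ + k + 2*n₀ + 2 := by ring
  omega

lemma c3rec (hst : Stable ((· ≤ ·) : S → S → Prop))
    (hid : ∀ x y e : S, IsIdemPow (y * x) e → x ≤ x * e)
    (flat : α → List S) (X : Set α) (Q : α → α → Prop)
    (hne : ∀ a ∈ X, flat a ≠ [])
    (hQle : ∀ a b, Q a b → Pr (flat a) (flat b) ∧ val (flat a) = val (flat b))
    {δ : S} (hδ : ∀ a ∈ X, val (flat a) = ↑δ)
    {n₀ : ℕ} (hfidem : sPow δ n₀ * sPow δ n₀ = sPow δ n₀) :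
    ∀ ch₁ ch₂ : List (List α), ∀ u w : List S,
      List.SublistForall₂ (List.Forall₂ Q) ch₁ ch₂ →
      (∀ c ∈ ch₂, c.length = n₀ + 1 ∧ ∀ a ∈ c, a ∈ X) →
      Pr u w → w ≠ [] → (∃ k, val w = ↑(sPow δ k)) →
      Pr (u ++ FL flat ch₁.flatten) (w ++ FL flat ch₂.flatten) := by
  intro ch₁
  induction ch₁ with
  | nil =>
    intro ch₂ u w _ hch₂ hPr hwne hwv
    by_cases hch : ch₂ = []
    · subst hch; simpa using hPr
    · obtain ⟨k, hk⟩ := hwv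
      have hrun : val (FL flat ch₂.flatten) = ↑(sPow δ n₀) :=
        runval flat hfidem ch₂
          (fun c hc => ⟨(hch₂ c hc).1, fun a ha => hδ a ((hch₂ c hc).2 a ha)⟩) hch
      obtain ⟨y, hy⟩ := f_factorR hfidem k
      have hlink : ∃ yy : WithOne S, (↑(sPow δ n₀) : WithOne S) = yy * val w :=
        ⟨↑y, by rw [hk, ← WithOne.coe_mul, ← hy]⟩
      have := pr_extendR hst hid hPr hwne hrun hfidem hlink
      simpa using this
  | cons c ch₁ ih =>
    intro ch₂ u w hslf hch₂ hPr hwne hwv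
    obtain ⟨gc, C, ch₂'', rfl, hQcC, hslfrest⟩ := slf_cons_split hslf
    obtain ⟨k, hk⟩ := hwv
    have hgcp : ∀ cc ∈ gc, cc.length = n₀ + 1 ∧ ∀ a ∈ cc, a ∈ X :=
      fun cc hcc => hch₂ cc (by simp [hcc])
    have hCp : C.length = n₀ + 1 ∧ ∀ a ∈ C, a ∈ X := hch₂ C (by simp)
    have hch₂'' : ∀ cc ∈ ch₂'', cc.length = n₀ + 1 ∧ ∀ a ∈ cc, a ∈ X :=
      fun cc hcc => hch₂ cc (by simp [hcc])
    -- absorb the gap chunks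
    have habs : Pr u (w ++ FL flat gc.flatten) ∧
        (∃ k₂, val (w ++ FL flat gc.flatten) = ↑(sPow δ k₂)) := by
      by_cases hgc : gc = []
      · subst hgc; exact ⟨by simpa using hPr, ⟨k, by simpa using hk⟩⟩
      · have hrun : val (FL flat gc.flatten) = ↑(sPow δ n₀) :=
          runval flat hfidem gc
            (fun cc hcc => ⟨(hgcp cc hcc).1, fun a ha => hδ a ((hgcp cc hcc).2 a ha)⟩) hgc
        obtain ⟨y, hy⟩ := f_factorR hfidem k
        have hlink : ∃ yy : WithOne S, (↑(sPow δ n₀) : WithOne S) = yy * val w :=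
          ⟨↑y, by rw [hk, ← WithOne.coe_mul, ← hy]⟩
        refine ⟨pr_extendR hst hid hPr hwne hrun hfidem hlink, ⟨k + n₀ + 1, ?_⟩⟩
        rw [val_append, hk, hrun, ← WithOne.coe_mul, sPow_add]
    obtain ⟨hPr₂, k₂, hk₂⟩ := habs
    -- the matched chunk
    have hCval : val (FL flat C) = ↑(sPow δ n₀) :=
      chunkval flat C n₀ hCp.1 (fun a ha => hδ a (hCp.2 a ha))
    have hfront := f2FL hst flat Q hQle hQcC
    have hrec := ih ch₂'' (u ++ FL flat c) ((w ++ FL flat gc.flatten) ++ FL flat C)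
      hslfrest hch₂''
      (pr_append hPr₂ hfront.1)
      (fun hc0 => by
        have := (List.append_eq_nil_iff.mp hc0).1
        have := (List.append_eq_nil_iff.mp this).1
        exact hwne this)
      ⟨k₂ + n₀ + 1, by rw [val_append, hk₂, hCval, ← WithOne.coe_mul, sPow_add]⟩
    have hre1 : (u ++ FL flat c) ++ FL flat ch₁.flatten = u ++ FL flat ((c :: ch₁).flatten) := by
      simp [FL]
    have hre2 : ((w ++ FL flat gc.flatten) ++ FL flat C) ++ FL flat ch₂''.flatten =
        w ++ FL flat ((gc ++ C :: ch₂'').flatten) := by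
      simp [FL]
    rw [hre1, hre2] at hrec
    exact hrec
end C3

/-! ### chunking -/

section Chunks
variable {β : Type}

def chunksF (n : ℕ) : ℕ → List β → List (List β) × List β
  | 0, l => ([], l)
  | fuel+1, l =>
    if l.length < n + 1 then ([], l)
    else
      let p := chunksF n fuel (l.drop (n+1))
      (l.take (n+1) :: p.1, p.2)

def chunks (n : ℕ) (l : List β) : List (List β) × List β := chunksF n l.length l

lemma chunksF_spec (n : ℕ) : ∀ fuel (l : List β), l.length ≤ fuel →
    (chunksF n fuel l).1.flatten ++ (chunksF n fuel l).2 = l ∧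
    (∀ c ∈ (chunksF n fuel l).1, c.length = n+1) ∧
    (chunksF n fuel l).2.length < n+1 := by
  intro fuel
  induction fuel with
  | zero =>
    intro l hl
    have : l = [] := List.length_eq_zero_iff.mp (by omega)
    subst this
    exact ⟨rfl, by simp [chunksF], by simp [chunksF]⟩
  | succ fuel ih =>
    intro l hl
    by_cases hlen : l.length < n + 1
    · have heq : chunksF n (fuel+1) l = ([], l) := by simp [chunksF, hlen]
      rw [heq]
      exact ⟨by simp, by simp, by simpa using hlen⟩
    · have hdrop : (l.drop (n+1)).length ≤ fuel := by
        rw [List.length_drop]; omega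
      obtain ⟨h1, h2, h3⟩ := ih (l.drop (n+1)) hdrop
      have heq : chunksF n (fuel+1) l =
          (l.take (n+1) :: (chunksF n fuel (l.drop (n+1))).1,
           (chunksF n fuel (l.drop (n+1))).2) := by
        simp [chunksF, hlen]
      rw [heq]
      refine ⟨?_, ?_, h3⟩
      · simp only [List.flatten_cons, List.append_assoc, h1]
        exact List.take_append_drop _ _
      · intro c hc
        rcases List.mem_cons.mp hc with rfl | hc
        · rw [List.length_take]; omega
        · exact h2 c hc

lemma chunks_spec (n : ℕ) (l : List β) :
    (chunks n l).1.flatten ++ (chunks n l).2 = l ∧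
    (∀ c ∈ (chunks n l).1, c.length = n+1) ∧
    (chunks n l).2.length < n+1 :=
  chunksF_spec n l.length l (le_refl _)

lemma chunks_mem {n : ℕ} {l : List β} {x : β}
    (h : x ∈ (chunks n l).1.flatten ∨ x ∈ (chunks n l).2) : x ∈ l := by
  have := (chunks_spec n l).1
  rcases h with h | h
  · rw [← this]; exact List.mem_append_left _ h
  · rw [← this]; exact List.mem_append_right _ h

end Chunks

/-! ### case C3 main -/

section C3b
variable {α : Type}

lemma c3core (hst : Stable ((· ≤ ·) : S → S → Prop))
    (hid : ∀ x y e : S, IsIdemPow (y * x) e → x ≤ x * e)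
    (flat : α → List S) (X : Set α) (Q : α → α → Prop)
    (hne : ∀ a ∈ X, flat a ≠ [])
    (hQle : ∀ a b, Q a b → Pr (flat a) (flat b) ∧ val (flat a) = val (flat b))
    {δ : S} (hδ : ∀ a ∈ X, val (flat a) = ↑δ)
    {n₀ : ℕ} (hfidem : sPow δ n₀ * sPow δ n₀ = sPow δ n₀) :
    ∀ (ch₁ ch₂ : List (List α)) (r₁ r₂ : List α),
      (∀ c ∈ ch₂, c.length = n₀ + 1 ∧ ∀ a ∈ c, a ∈ X) →
      (∀ a ∈ r₂, a ∈ X) →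
      List.SublistForall₂ (List.Forall₂ Q) ch₁ ch₂ →
      List.Forall₂ Q r₁ r₂ →
      val (FL flat ch₁.flatten ++ FL flat r₁) =
        val (FL flat ch₂.flatten ++ FL flat r₂) →
      Pr (FL flat ch₁.flatten ++ FL flat r₁) (FL flat ch₂.flatten ++ FL flat r₂) := by
  intro ch₁ ch₂ r₁ r₂ hch₂X hr₂X hch hrem hvaleq
  have hch₂prop : ∀ c ∈ ch₂, c.length = n₀ + 1 ∧ ∀ a ∈ c, val (flat a) = ↑δ :=
    fun c hc => ⟨(hch₂X c hc).1, fun a ha => hδ a ((hch₂X c hc).2 a ha)⟩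
  cases ch₁ with
  | nil =>
    cases hrem with
    | nil =>
      have h2 : val (FL flat ch₂.flatten ++ FL flat ([] : List α)) = 1 := by
        rw [← hvaleq]; simp
      rw [val_eq_one_iff.mp h2]
      simpa using (LeSigma.nil : Pr [] [])
    | cons hxy hrest =>
      rename_i x y r₁' r₂'
      have hyX : y ∈ X := hr₂X y (by simp)
      have hfront : Pr (flat x) (flat y) := (hQle x y hxy).1
      have hrest' := f2FL hst flat Q hQle hrest
      by_cases hch₂0 : ch₂ = []
      · subst hch₂0
        simpa using pr_append hfront hrest'.1
      · have hrun : val (FL flat ch₂.flatten) = ↑(sPow δ n₀) :=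
          runval flat hfidem ch₂ hch₂prop hch₂0
        obtain ⟨y', hy'⟩ := f_factorL hfidem 0
        have hy'' : sPow δ n₀ = δ * y' := hy'
        have hlink : ∃ yy : WithOne S, (↑(sPow δ n₀) : WithOne S) = val (flat y) * yy :=
          ⟨↑y', by rw [hδ y hyX, ← WithOne.coe_mul, ← hy'']⟩
        have hfront₂ : Pr (flat x) (FL flat ch₂.flatten ++ flat y) :=
          pr_extendL hst hid hfront (hne y hyX) hrun hfidem hlink
        have := pr_append hfront₂ hrest'.1
        simpa [List.append_assoc] using this
  | cons c ch₁'' =>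
    obtain ⟨gc, C, ch₂'', hsplit, hQcC, hslfrest⟩ := slf_cons_split hch
    subst hsplit
    have hgcX : ∀ cc ∈ gc, cc.length = n₀ + 1 ∧ ∀ a ∈ cc, a ∈ X :=
      fun cc hcc => hch₂X cc (by simp [hcc])
    have hCX : C.length = n₀ + 1 ∧ ∀ a ∈ C, a ∈ X := hch₂X C (by simp)
    have hch₂''X : ∀ cc ∈ ch₂'', cc.length = n₀ + 1 ∧ ∀ a ∈ cc, a ∈ X :=
      fun cc hcc => hch₂X cc (by simp [hcc])
    have hCne : C ≠ [] := by
      intro h0; rw [h0] at hCX; simp at hCX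
    have hFLCne : FL flat C ≠ [] := FL_ne_nil hne hCX.2 hCne
    have hCval : val (FL flat C) = ↑(sPow δ n₀) :=
      chunkval flat C n₀ hCX.1 (fun a ha => hδ a (hCX.2 a ha))
    have hfront : Pr (FL flat c) (FL flat C) := (f2FL hst flat Q hQle hQcC).1
    have habs : Pr (FL flat c) (FL flat gc.flatten ++ FL flat C) ∧
        (∃ k, val (FL flat gc.flatten ++ FL flat C) = ↑(sPow δ k)) := by
      by_cases hgc : gc = []
      · subst hgc
        exact ⟨by simpa using hfront, ⟨n₀, by simpa using hCval⟩⟩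
      · have hrun : val (FL flat gc.flatten) = ↑(sPow δ n₀) :=
          runval flat hfidem gc
            (fun cc hcc => ⟨(hgcX cc hcc).1, fun a ha => hδ a ((hgcX cc hcc).2 a ha)⟩) hgc
        obtain ⟨y', hy'⟩ := f_factorL hfidem n₀
        have hlink : ∃ yy : WithOne S, (↑(sPow δ n₀) : WithOne S) = val (FL flat C) * yy :=
          ⟨↑y', by rw [hCval, ← WithOne.coe_mul, ← hy']⟩
        refine ⟨pr_extendL hst hid hfront hFLCne hrun hfidem hlink, ⟨n₀ + n₀ + 1, ?_⟩⟩
        rw [val_append, hrun, hCval, ← WithOne.coe_mul, sPow_add]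
    obtain ⟨hfront₂, k₀, hk₀⟩ := habs
    have hrec := c3rec hst hid flat X Q hne hQle hδ hfidem ch₁'' ch₂''
      (FL flat c) (FL flat gc.flatten ++ FL flat C)
      hslfrest hch₂''X hfront₂
      (fun h0 => hFLCne (List.append_eq_nil_iff.mp h0).2)
      ⟨k₀, hk₀⟩
    have hrem' := f2FL hst flat Q hQle hrem
    have hfinal := pr_append hrec hrem'.1
    have e1 : FL flat ((c :: ch₁'').flatten) = FL flat c ++ FL flat ch₁''.flatten := by
      simp [FL]
    have e2 : FL flat ((gc ++ C :: ch₂'').flatten) =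
        FL flat gc.flatten ++ (FL flat C ++ FL flat ch₂''.flatten) := by
      simp [FL]
    rw [e1, e2]
    simpa [List.append_assoc] using hfinal

lemma caseC3 (hst : Stable ((· ≤ ·) : S → S → Prop))
    (hid : ∀ x y e : S, IsIdemPow (y * x) e → x ≤ x * e)
    (flat : α → List S) (X : Set α) (Q : α → α → Prop)
    (hrefl : Reflexive Q) (htrans : Transitive Q)
    (hne : ∀ a ∈ X, flat a ≠ [])
    (hQpwo : X.PartiallyWellOrderedOn Q)
    (hQle : ∀ a b, Q a b → Pr (flat a) (flat b) ∧ val (flat a) = val (flat b))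
    {δ : S} (hδ : ∀ a ∈ X, val (flat a) = ↑δ) :
    {l : List α | ∀ a ∈ l, a ∈ X}.PartiallyWellOrderedOn (Rr flat) := by
  classical
  haveI : Finite (WithOne S) := by unfold WithOne; infer_instance
  haveI : IsRefl α Q := ⟨hrefl⟩
  haveI : IsTrans α Q := ⟨fun _ _ _ h1 h2 => htrans h1 h2⟩
  haveI : IsRefl (List α) (List.Forall₂ Q) := ⟨fun l => List.forall₂_refl l⟩
  haveI : IsTrans (List α) (List.Forall₂ Q) := ⟨fun _ _ _ h1 h2 => f2_trans htrans h1 h2⟩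
  obtain ⟨n₀, hfidem⟩ := exists_idem_sPow δ
  haveI := isPre_of Q
  haveI := isPre_of (List.Forall₂ Q)
  haveI := isPre_of (List.SublistForall₂ (List.Forall₂ Q))
  have pwoHig := Set.PartiallyWellOrderedOn.partiallyWellOrderedOn_sublistForall₂ Q hQpwo
  -- fixed-length chunks
  have pwos₁ : ({c : List α | c.length = n₀ + 1 ∧ ∀ a ∈ c, a ∈ X} :
      Set (List α)).PartiallyWellOrderedOn (List.Forall₂ Q) := by
    have h1 : ({c : List α | c.length = n₀ + 1 ∧ ∀ a ∈ c, a ∈ X} :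
        Set (List α)).PartiallyWellOrderedOn (List.SublistForall₂ Q) :=
      pwoHig.mono (fun c hc => hc.2)
    refine pwo_imp h1 ?_
    intro a b ha hb hab
    exact slf_forall₂ hab (by rw [ha.1, hb.1])
  -- short remainders
  have pwos₂ : ({c : List α | c.length < n₀ + 1 ∧ ∀ a ∈ c, a ∈ X} :
      Set (List α)).PartiallyWellOrderedOn (List.Forall₂ Q) := by
    have h1 : ({c : List α | c.length < n₀ + 1 ∧ ∀ a ∈ c, a ∈ X} :
        Set (List α)).PartiallyWellOrderedOn (List.SublistForall₂ Q) :=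
      pwoHig.mono (fun c hc => hc.2)
    have h2 := pwo_and_eq (r := List.SublistForall₂ Q)
      (fun l => List.SublistForall₂.is_refl.refl l)
      (fun _ _ _ ha hb => List.SublistForall₂.is_trans.trans _ _ _ ha hb)
      h1 (fun l => (⟨min l.length (n₀+1), by omega⟩ : Fin (n₀+2)))
    refine pwo_imp h2 ?_
    intro a b ha hb hab
    have hmm : min a.length (n₀+1) = min b.length (n₀+1) := by
      simpa using congrArg Fin.val hab.2
    have h1 := ha.1
    have h2' := hb.1
    refine slf_forall₂ hab.1 ?_
    omega
  have pwoCh := Set.PartiallyWellOrderedOn.partiallyWellOrderedOn_sublistForall₂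
    (List.Forall₂ Q) pwos₁
  have pwopair := pwoCh.prod pwos₂
  have pwor3 : {l : List α | ∀ a ∈ l, a ∈ X}.PartiallyWellOrderedOn
      (fun l₁ l₂ =>
        List.SublistForall₂ (List.Forall₂ Q) (chunks n₀ l₁).1 (chunks n₀ l₂).1 ∧
        List.Forall₂ Q (chunks n₀ l₁).2 (chunks n₀ l₂).2) := by
    refine pwo_of_map (fun l => ((chunks n₀ l).1, (chunks n₀ l).2)) ?_
      (fun _ _ _ _ h => h) pwopair
    intro l hl
    constructor
    · intro c hc
      refine ⟨(chunks_spec n₀ l).2.1 c hc,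
        fun a ha => hl a (chunks_mem (n := n₀) (l := l) (Or.inl ?_))⟩
      exact List.mem_flatten.mpr ⟨c, hc, ha⟩
    · exact ⟨(chunks_spec n₀ l).2.2,
        fun a ha => hl a (chunks_mem (n := n₀) (l := l) (Or.inr ha))⟩
  have hr3refl : Reflexive (fun l₁ l₂ : List α =>
      List.SublistForall₂ (List.Forall₂ Q) (chunks n₀ l₁).1 (chunks n₀ l₂).1 ∧
      List.Forall₂ Q (chunks n₀ l₁).2 (chunks n₀ l₂).2) :=
    fun l => ⟨List.SublistForall₂.is_refl.refl _, List.forall₂_refl _⟩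
  have hr3trans : Transitive (fun l₁ l₂ : List α =>
      List.SublistForall₂ (List.Forall₂ Q) (chunks n₀ l₁).1 (chunks n₀ l₂).1 ∧
      List.Forall₂ Q (chunks n₀ l₁).2 (chunks n₀ l₂).2) :=
    fun _ _ _ h1 h2 =>
      ⟨List.SublistForall₂.is_trans.trans _ _ _ h1.1 h2.1, f2_trans htrans h1.2 h2.2⟩
  have pwor4 := pwo_and_eq hr3refl hr3trans pwor3 (fun l => val (FL flat l))
  refine pwo_imp pwor4 ?_
  intro l₁ l₂ h₁ h₂ hr
  have hch₂X : ∀ c ∈ (chunks n₀ l₂).1, c.length = n₀ + 1 ∧ ∀ a ∈ c, a ∈ X := by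
    intro c hc
    refine ⟨(chunks_spec n₀ l₂).2.1 c hc,
      fun a ha => h₂ a (chunks_mem (n := n₀) (l := l₂) (Or.inl ?_))⟩
    exact List.mem_flatten.mpr ⟨c, hc, ha⟩
  have hr₂X : ∀ a ∈ (chunks n₀ l₂).2, a ∈ X :=
    fun a ha => h₂ a (chunks_mem (n := n₀) (l := l₂) (Or.inr ha))
  have he₁ := (chunks_spec n₀ l₁).1
  have he₂ := (chunks_spec n₀ l₂).1
  have hFL₁ : FL flat l₁ =
      FL flat (chunks n₀ l₁).1.flatten ++ FL flat (chunks n₀ l₁).2 := by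
    rw [← FL_append, he₁]
  have hFL₂ : FL flat l₂ =
      FL flat (chunks n₀ l₂).1.flatten ++ FL flat (chunks n₀ l₂).2 := by
    rw [← FL_append, he₂]
  have hveq : val (FL flat (chunks n₀ l₁).1.flatten ++ FL flat (chunks n₀ l₁).2) =
      val (FL flat (chunks n₀ l₂).1.flatten ++ FL flat (chunks n₀ l₂).2) := by
    rw [← hFL₁, ← hFL₂]; exact hr.2
  have hcore := c3core hst hid flat X Q hne hQle hδ hfidem
    (chunks n₀ l₁).1 (chunks n₀ l₂).1 (chunks n₀ l₁).2 (chunks n₀ l₂).2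
    hch₂X hr₂X hr.1.1 hr.1.2 hveq
  refine ⟨?_, hr.2⟩
  rw [hFL₁, hFL₂]
  exact hcore
end C3b

/-! ### case C1 : syllable splitting at a pivot value -/

section C1
variable {α : Type}

open Classical in
noncomputable def csplit (p : α → Prop) : List α → List (List α × α) × List α
  | [] => ([], [])
  | x :: r =>
    let s := csplit p r
    if p x then ((([] : List α), x) :: s.1, s.2)
    else
      match s1 : s.1 with
      | [] => ([], x :: s.2)
      | (U, w) :: ps => ((x :: U, w) :: ps, s.2)

lemma csplit_spec (p : α → Prop) : ∀ l : List α,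
    (((csplit p l).1.map (fun q => q.1 ++ [q.2])).flatten ++ (csplit p l).2 = l) ∧
    (∀ q ∈ (csplit p l).1, p q.2 ∧ ∀ a ∈ q.1, ¬ p a) ∧
    (∀ a ∈ (csplit p l).2, ¬ p a) := by
  classical
  intro l
  induction l with
  | nil => exact ⟨rfl, by simp [csplit], by simp [csplit]⟩
  | cons x r ih =>
    obtain ⟨ih1, ih2, ih3⟩ := ih
    by_cases hx : p x
    · have he : csplit p (x :: r) = ((([] : List α), x) :: (csplit p r).1, (csplit p r).2) := by
        simp [csplit, hx]
      rw [he]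
      refine ⟨?_, ?_, ih3⟩
      · simpa using ih1
      · intro q hq
        rcases List.mem_cons.mp hq with rfl | hq
        · exact ⟨hx, by simp⟩
        · exact ih2 q hq
    · cases hs1 : (csplit p r).1 with
      | nil =>
        have he : csplit p (x :: r) = ([], x :: (csplit p r).2) := by
          simp only [csplit, if_neg hx]
          rw [hs1]
        rw [he]
        have hr : (csplit p r).2 = r := by
          rw [hs1] at ih1; simpa using ih1
        refine ⟨by simp [hr], by simp, ?_⟩
        intro a ha
        rcases List.mem_cons.mp ha with rfl | ha
        · exact hx
        · exact ih3 a ha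
      | cons q ps =>
        obtain ⟨U, w⟩ := q
        have he : csplit p (x :: r) = ((x :: U, w) :: ps, (csplit p r).2) := by
          simp only [csplit, if_neg hx]
          rw [hs1]
        rw [he]
        rw [hs1] at ih1 ih2
        refine ⟨?_, ?_, ih3⟩
        · simpa [List.append_assoc] using congrArg (fun t => x :: t) ih1
        · intro q' hq'
          rcases List.mem_cons.mp hq' with rfl | hq'
          · refine ⟨(ih2 (U, w) (by simp)).1, ?_⟩
            intro a ha
            rcases List.mem_cons.mp ha with rfl | ha
            · exact hx
            · exact (ih2 (U, w) (by simp)).2 a ha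
          · exact ih2 q' (by simp [hq'])

lemma csplit_mem (p : α → Prop) (l : List α) :
    (∀ q ∈ (csplit p l).1, (∀ a ∈ q.1, a ∈ l) ∧ q.2 ∈ l) ∧
    (∀ a ∈ (csplit p l).2, a ∈ l) := by
  have h1 := (csplit_spec p l).1
  constructor
  · intro q hq
    constructor
    · intro a ha
      rw [← h1]
      refine List.mem_append_left _ (List.mem_flatten.mpr ⟨q.1 ++ [q.2], ?_, ?_⟩)
      · exact List.mem_map.mpr ⟨q, hq, rfl⟩
      · exact List.mem_append_left _ ha
    · rw [← h1]
      refine List.mem_append_left _ (List.mem_flatten.mpr ⟨q.1 ++ [q.2], ?_, ?_⟩)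
      · exact List.mem_map.mpr ⟨q, hq, rfl⟩
      · exact List.mem_append_right _ (by simp)
  · intro a ha
    rw [← h1]
    exact List.mem_append_right _ ha

lemma FLsyl (flat : α → List S) : ∀ L : List (List α × α),
    FL (fun q : List α × α => FL flat q.1 ++ flat q.2) L =
      FL flat ((L.map (fun q => q.1 ++ [q.2])).flatten) := by
  intro L
  induction L with
  | nil => rfl
  | cons q L ih =>
    have h1 : FL (fun q : List α × α => FL flat q.1 ++ flat q.2) (q :: L)
        = (FL flat q.1 ++ flat q.2) ++ FL (fun q : List α × α => FL flat q.1 ++ flat q.2) L :=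
      FL_cons _ _ _
    rw [h1, ih]
    simp [FL]

lemma caseC1 (hst : Stable ((· ≤ ·) : S → S → Prop))
    (flat : α → List S) (X : Set α) (δ : S)
    (hpwo1 : {l : List α | ∀ a ∈ l, a ∈ X ∧ val (flat a) ≠ ↑δ}.PartiallyWellOrderedOn (Rr flat))
    (hpwo2 : {L : List (List α × α) | ∀ q ∈ L,
        (∀ a ∈ q.1, a ∈ X ∧ val (flat a) ≠ ↑δ) ∧ q.2 ∈ X ∧ val (flat q.2) = ↑δ}.PartiallyWellOrderedOn
      (Rr (fun q : List α × α => FL flat q.1 ++ flat q.2))) :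
    {l : List α | ∀ a ∈ l, a ∈ X}.PartiallyWellOrderedOn (Rr flat) := by
  classical
  set flat' : List α × α → List S := fun q => FL flat q.1 ++ flat q.2 with hflat'
  haveI : IsRefl (List (List α × α)) (Rr flat') := ⟨Rr_refl flat'⟩
  haveI : IsTrans (List (List α × α)) (Rr flat') :=
    ⟨fun _ _ _ h1 h2 => Rr_trans hst flat' h1 h2⟩
  set p : α → Prop := fun a => val (flat a) = ↑δ with hp
  haveI := isPre_of (Rr flat')
  have pwopair := hpwo2.prod hpwo1
  refine pwo_of_map (fun l => ((csplit p l).1, (csplit p l).2)) ?_ ?_ pwopair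
  · intro l hl
    obtain ⟨hm1, hm2⟩ := csplit_mem p l
    obtain ⟨-, hs2, hs3⟩ := csplit_spec p l
    constructor
    · intro q hq
      refine ⟨fun a ha => ⟨hl a ((hm1 q hq).1 a ha), (hs2 q hq).2 a ha⟩,
        hl q.2 (hm1 q hq).2, (hs2 q hq).1⟩
    · exact fun a ha => ⟨hl a (hm2 a ha), hs3 a ha⟩
  · intro l₁ l₂ h₁ h₂ hrel
    obtain ⟨hb, ht⟩ := hrel
    have key : ∀ l : List α, FL flat l =
        FL flat' (csplit p l).1 ++ FL flat (csplit p l).2 := by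
      intro l
      rw [FLsyl flat]
      rw [← FL_append]
      rw [(csplit_spec p l).1]
    constructor
    · rw [key l₁, key l₂]
      exact pr_append hb.1 ht.1
    · rw [key l₁, key l₂, val_append, val_append, hb.2, ht.2]
end C1

/-! ### right-divisibility derivation and the master theorem -/

lemma rdiv_derive {V : Set S}
    (hpair : ∃ δ₁ δ₂, δ₁ ∈ V ∧ δ₂ ∈ V ∧ δ₁ ≠ δ₂)
    (hnc : ∀ δ ∈ V, ∀ n, InN V n → n = δ ∨ ∃ u, InN V u ∧ n = u * δ) :
    ∀ n, InN V n → ∀ ν, InN V ν → ∃ u, InN V u ∧ n = u * ν := by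
  have step1 : ∀ δ ∈ V, ∀ n, InN V n → ∃ u, InN V u ∧ n = u * δ := by
    intro δ hδ n hn
    rcases hnc δ hδ n hn with rfl | h
    · -- n = δ : find δ' ≠ δ in V
      obtain ⟨δ₁, δ₂, h₁, h₂, hne⟩ := hpair
      have hex : ∃ δ', δ' ∈ V ∧ δ' ≠ n := by
        by_cases h : δ₁ = n
        · exact ⟨δ₂, h₂, by rw [← h]; exact fun hc => hne hc.symm⟩
        · exact ⟨δ₁, h₁, h⟩
      obtain ⟨δ', hδ'V, hδ'ne⟩ := hex
      have h1 : δ' = n ∨ ∃ y, InN V y ∧ δ' = y * n := hnc n hδ δ' (InN.base hδ'V)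
      rcases h1 with h1 | ⟨y, hy, hy2⟩
      · exact absurd h1 hδ'ne
      · have h2 : n = δ' ∨ ∃ x, InN V x ∧ n = x * δ' := hnc δ' hδ'V n hn
        rcases h2 with h2 | ⟨x, hx, hx2⟩
        · exact absurd h2.symm hδ'ne
        · refine ⟨x * y, hx.mul hy, ?_⟩
          rw [mul_assoc, ← hy2, ← hx2]
    · exact h
  intro n hn ν hν
  induction hν generalizing n with
  | base hb => exact step1 _ hb n hn
  | mul ha hb iha ihb =>
    rename_i a b
    obtain ⟨u₂, hu₂, he₂⟩ := ihb n hn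
    obtain ⟨u₁, hu₁, he₁⟩ := iha u₂ hu₂
    exact ⟨u₁, hu₁, by rw [he₂, he₁, mul_assoc]⟩

lemma master (hst : Stable ((· ≤ ·) : S → S → Prop))
    (hid : ∀ x y e : S, IsIdemPow (y * x) e → x ≤ x * e) :
    ∀ m : ℕ, ∀ (α : Type) (flat : α → List S) (X : Set α) (Q : α → α → Prop),
      Reflexive Q → Transitive Q →
      (∀ a ∈ X, flat a ≠ []) →
      X.PartiallyWellOrderedOn Q →
      (∀ a b, Q a b → Pr (flat a) (flat b) ∧ val (flat a) = val (flat b)) →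
      (Fintype.card S + 2) * {x | InN (Vset flat X) x}.ncard + (Vset flat X).ncard ≤ m →
      {l : List α | ∀ a ∈ l, a ∈ X}.PartiallyWellOrderedOn (Rr flat) := by
  have emptycase : ∀ (α : Type) (flat : α → List S) (X : Set α),
      (∀ a ∈ X, flat a ≠ []) → Vset flat X = ∅ →
      {l : List α | ∀ a ∈ l, a ∈ X}.PartiallyWellOrderedOn (Rr flat) := by
    intro α flat X hne hV
    have hX : ∀ a, a ∉ X := by
      intro a ha
      obtain ⟨s, hs⟩ := val_exists_coe (hne a ha)
      have hmem : s ∈ Vset flat X := ⟨a, ha, hs⟩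
      rw [hV] at hmem
      exact hmem
    rw [Set.partiallyWellOrderedOn_iff_exists_lt]
    intro f hf
    refine ⟨0, 1, by omega, ?_⟩
    have h0 : f 0 = [] := by
      cases hc : f 0 with
      | nil => rfl
      | cons a t => exact absurd (hf 0 a (by rw [hc]; simp)) (hX a)
    have h1 : f 1 = [] := by
      cases hc : f 1 with
      | nil => rfl
      | cons a t => exact absurd (hf 1 a (by rw [hc]; simp)) (hX a)
    rw [h0, h1]
    exact Rr_refl flat []
  intro m
  induction m with
  | zero =>
    intro α flat X Q hrefl htrans hne hQpwo hQle hms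
    have hV : Vset flat X = ∅ := by
      have h1 : (Vset flat X).ncard = 0 := by omega
      exact (Set.ncard_eq_zero (Set.toFinite _)).mp h1
    exact emptycase α flat X hne hV
  | succ m ih =>
    intro α flat X Q hrefl htrans hne hQpwo hQle hms
    rcases Set.eq_empty_or_nonempty (Vset flat X) with hV | ⟨δ₀, hδ₀⟩
    · exact emptycase α flat X hne hV
    by_cases hsing : ∀ s ∈ Vset flat X, s = δ₀
    · -- case C3
      have hδ : ∀ a ∈ X, val (flat a) = ↑δ₀ := by
        intro a ha
        obtain ⟨s, hs⟩ := val_exists_coe (hne a ha)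
        rw [hs, hsing s ⟨a, ha, hs⟩]
      exact caseC3 hst hid flat X Q hrefl htrans hne hQpwo hQle hδ
    by_cases hc1 : ∃ δ ∈ Vset flat X, ∃ n₀, InN (Vset flat X) n₀ ∧ n₀ ≠ δ ∧
        ∀ u, InN (Vset flat X) u → n₀ ≠ u * δ
    · -- case C1
      obtain ⟨δ, hδV, n₀, hn₀N, hn₀δ, hn₀D⟩ := hc1
      have hfinV : (Vset flat X).Finite := Set.toFinite _
      have hfinN : {x | InN (Vset flat X) x}.Finite := Set.toFinite _
      -- recursive call 1 : pivot-free letters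
      have hne₁ : ∀ a ∈ ({a | a ∈ X ∧ val (flat a) ≠ ↑δ} : Set α), flat a ≠ [] :=
        fun a ha => hne a ha.1
      have hQpwo₁ : ({a | a ∈ X ∧ val (flat a) ≠ ↑δ} : Set α).PartiallyWellOrderedOn Q :=
        hQpwo.mono (fun a ha => ha.1)
      have hV₁sub : Vset flat {a | a ∈ X ∧ val (flat a) ≠ ↑δ} ⊆ Vset flat X \ {δ} := by
        rintro s ⟨a, ha, hs⟩
        refine ⟨⟨a, ha.1, hs⟩, ?_⟩
        intro hmem
        rw [Set.mem_singleton_iff] at hmem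
        exact ha.2 (by rw [hs, hmem])
      have hN₁sub : {x | InN (Vset flat {a | a ∈ X ∧ val (flat a) ≠ ↑δ}) x} ⊆
          {x | InN (Vset flat X) x} :=
        fun x hx => InN.mono (fun s hs => (hV₁sub hs).1) hx
      have hm1 : (Fintype.card S + 2) *
          {x | InN (Vset flat ({a | a ∈ X ∧ val (flat a) ≠ ↑δ} : Set α)) x}.ncard +
          (Vset flat ({a | a ∈ X ∧ val (flat a) ≠ ↑δ} : Set α)).ncard ≤ m := by
        have e1 : (Vset flat ({a | a ∈ X ∧ val (flat a) ≠ ↑δ} : Set α)).ncard ≤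
            (Vset flat X \ {δ}).ncard := Set.ncard_le_ncard hV₁sub hfinV.sdiff
        have e2 : (Vset flat X \ {δ}).ncard = (Vset flat X).ncard - 1 :=
          Set.ncard_sdiff_singleton_of_mem hδV
        have e25 : 0 < (Vset flat X).ncard := (Set.ncard_pos hfinV).mpr ⟨δ, hδV⟩
        have e3 : {x | InN (Vset flat ({a | a ∈ X ∧ val (flat a) ≠ ↑δ} : Set α)) x}.ncard ≤
            {x | InN (Vset flat X) x}.ncard := Set.ncard_le_ncard hN₁sub hfinN
        have e4 := Nat.mul_le_mul_left (Fintype.card S + 2) e3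
        omega
      have call1 := ih α flat {a | a ∈ X ∧ val (flat a) ≠ ↑δ} Q hrefl htrans hne₁ hQpwo₁ hQle hm1
      -- recursive call 2 : syllables
      have hrefl' : Reflexive (fun q q' : List α × α => Rr flat q.1 q'.1 ∧ Q q.2 q'.2) :=
        fun q => ⟨Rr_refl flat q.1, hrefl q.2⟩
      have htrans' : Transitive (fun q q' : List α × α => Rr flat q.1 q'.1 ∧ Q q.2 q'.2) :=
        fun _ _ _ h1 h2 => ⟨Rr_trans hst flat h1.1 h2.1, htrans h1.2 h2.2⟩
      have hne' : ∀ q ∈ ({q : List α × α |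
          (∀ a ∈ q.1, a ∈ X ∧ val (flat a) ≠ ↑δ) ∧ q.2 ∈ X ∧ val (flat q.2) = ↑δ} :
            Set (List α × α)),
          (fun q : List α × α => FL flat q.1 ++ flat q.2) q ≠ [] := by
        intro q hq hc
        exact hne q.2 hq.2.1 (List.append_eq_nil_iff.mp hc).2
      have hQpwo' : ({q : List α × α |
          (∀ a ∈ q.1, a ∈ X ∧ val (flat a) ≠ ↑δ) ∧ q.2 ∈ X ∧ val (flat q.2) = ↑δ} :
            Set (List α × α)).PartiallyWellOrderedOn
          (fun q q' : List α × α => Rr flat q.1 q'.1 ∧ Q q.2 q'.2) := by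
        haveI : IsRefl (List α) (Rr flat) := ⟨Rr_refl flat⟩
        haveI : IsTrans (List α) (Rr flat) := ⟨fun _ _ _ a b => Rr_trans hst flat a b⟩
        haveI : IsRefl α Q := ⟨hrefl⟩
        haveI : IsTrans α Q := ⟨fun _ _ _ a b => htrans a b⟩
        have hXδpwo : ({a | a ∈ X ∧ val (flat a) = ↑δ} : Set α).PartiallyWellOrderedOn Q :=
          hQpwo.mono (fun a ha => ha.1)
        haveI := isPre_of (Rr flat)
        have hpp := call1.prod hXδpwo
        refine pwo_of_map (fun q : List α × α => (q.1, q.2)) ?_ ?_ hpp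
        · intro q hq
          exact ⟨fun a ha => hq.1 a ha, hq.2.1, hq.2.2⟩
        · intro q q' _ _ h
          exact ⟨h.1, h.2⟩
      have hQle' : ∀ q q' : List α × α,
          (Rr flat q.1 q'.1 ∧ Q q.2 q'.2) →
          Pr ((fun q : List α × α => FL flat q.1 ++ flat q.2) q)
            ((fun q : List α × α => FL flat q.1 ++ flat q.2) q') ∧
          val ((fun q : List α × α => FL flat q.1 ++ flat q.2) q) =
            val ((fun q : List α × α => FL flat q.1 ++ flat q.2) q') := by
        intro q q' h
        refine ⟨pr_append h.1.1 (hQle _ _ h.2).1, ?_⟩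
        show val (FL flat q.1 ++ flat q.2) = val (FL flat q'.1 ++ flat q'.2)
        rw [val_append, val_append, h.1.2, (hQle _ _ h.2).2]
      -- the measure for the syllable alphabet
      have hDsubN : ({s | s = δ ∨ ∃ nn, InN (Vset flat X) nn ∧ s = nn * δ} : Set S) ⊆
          {x | InN (Vset flat X) x} := by
        rintro s (rfl | ⟨nn, hnn, rfl⟩)
        · exact InN.base hδV
        · exact hnn.mul (InN.base hδV)
      have hDclosed : ∀ a ∈ ({s | s = δ ∨ ∃ nn, InN (Vset flat X) nn ∧ s = nn * δ} : Set S),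
          ∀ b ∈ ({s | s = δ ∨ ∃ nn, InN (Vset flat X) nn ∧ s = nn * δ} : Set S),
          a * b ∈ ({s | s = δ ∨ ∃ nn, InN (Vset flat X) nn ∧ s = nn * δ} : Set S) := by
        rintro a ha b (rfl | ⟨nn, hnn, rfl⟩)
        · exact Or.inr ⟨a, hDsubN ha, rfl⟩
        · exact Or.inr ⟨a * nn, (hDsubN ha).mul hnn, (mul_assoc _ _ _).symm⟩
      have hV'subD : Vset (fun q : List α × α => FL flat q.1 ++ flat q.2)
          ({q : List α × α |
            (∀ a ∈ q.1, a ∈ X ∧ val (flat a) ≠ ↑δ) ∧ q.2 ∈ X ∧ val (flat q.2) = ↑δ}) ⊆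
          ({s | s = δ ∨ ∃ nn, InN (Vset flat X) nn ∧ s = nn * δ} : Set S) := by
        rintro s ⟨q, hq, hs⟩
        have h2 : val (FL flat q.1 ++ flat q.2) = val (FL flat q.1) * ↑δ := by
          rw [val_append, hq.2.2]
        by_cases hU : q.1 = []
        · left
          have h3 : val (FL flat q.1 ++ flat q.2) = ↑δ := by
            rw [hU]
            simp only [FL_nil, List.nil_append]
            exact hq.2.2
          have h4 : (↑s : WithOne S) = ↑δ := by rw [← hs, h3]
          exact WithOne.coe_inj.mp h4
        · right
          obtain ⟨z, hz, hvz⟩ := valFL_mem hne₁ q.1 (fun a ha => hq.1 a ha) hU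
          have hzV : InN (Vset flat X) z := InN.mono (fun s' hs' => (hV₁sub hs').1) hz
          refine ⟨z, hzV, ?_⟩
          rw [h2, hvz, ← WithOne.coe_mul] at hs
          exact (WithOne.coe_inj.mp hs).symm
      have hN'subD : {x | InN (Vset (fun q : List α × α => FL flat q.1 ++ flat q.2)
          ({q : List α × α |
            (∀ a ∈ q.1, a ∈ X ∧ val (flat a) ≠ ↑δ) ∧ q.2 ∈ X ∧ val (flat q.2) = ↑δ})) x} ⊆
          ({s | s = δ ∨ ∃ nn, InN (Vset flat X) nn ∧ s = nn * δ} : Set S) :=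
        fun x hx => InN_subset_of_closed hV'subD hDclosed hx
      have hn₀notD : n₀ ∉ ({s | s = δ ∨ ∃ nn, InN (Vset flat X) nn ∧ s = nn * δ} : Set S) := by
        rintro (rfl | ⟨u, hu, he⟩)
        · exact hn₀δ rfl
        · exact hn₀D u hu he
      have hssub : {x | InN (Vset (fun q : List α × α => FL flat q.1 ++ flat q.2)
          ({q : List α × α |
            (∀ a ∈ q.1, a ∈ X ∧ val (flat a) ≠ ↑δ) ∧ q.2 ∈ X ∧ val (flat q.2) = ↑δ})) x} ⊂
          {x | InN (Vset flat X) x} := by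
        refine ⟨fun x hx => hDsubN (hN'subD hx), ?_⟩
        intro hcontra
        exact hn₀notD (hN'subD (hcontra hn₀N))
      have hm2 : (Fintype.card S + 2) *
          {x | InN (Vset (fun q : List α × α => FL flat q.1 ++ flat q.2)
            ({q : List α × α |
              (∀ a ∈ q.1, a ∈ X ∧ val (flat a) ≠ ↑δ) ∧ q.2 ∈ X ∧ val (flat q.2) = ↑δ})) x}.ncard +
          (Vset (fun q : List α × α => FL flat q.1 ++ flat q.2)
            ({q : List α × α |
              (∀ a ∈ q.1, a ∈ X ∧ val (flat a) ≠ ↑δ) ∧ q.2 ∈ X ∧ val (flat q.2) = ↑δ})).ncard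
          ≤ m := by
        have e1 := Set.ncard_lt_ncard hssub hfinN
        have e2 : (Vset (fun q : List α × α => FL flat q.1 ++ flat q.2)
            ({q : List α × α |
              (∀ a ∈ q.1, a ∈ X ∧ val (flat a) ≠ ↑δ) ∧ q.2 ∈ X ∧ val (flat q.2) = ↑δ})).ncard ≤
            {x | InN (Vset (fun q : List α × α => FL flat q.1 ++ flat q.2)
            ({q : List α × α |
              (∀ a ∈ q.1, a ∈ X ∧ val (flat a) ≠ ↑δ) ∧ q.2 ∈ X ∧ val (flat q.2) = ↑δ})) x}.ncard :=
          Set.ncard_le_ncard (fun s hs => InN.base hs) (Set.toFinite _)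
        have e3 : {x | InN (Vset (fun q : List α × α => FL flat q.1 ++ flat q.2)
            ({q : List α × α |
              (∀ a ∈ q.1, a ∈ X ∧ val (flat a) ≠ ↑δ) ∧ q.2 ∈ X ∧ val (flat q.2) = ↑δ})) x}.ncard ≤
            Fintype.card S := by
          have h4 : {x | InN (Vset (fun q : List α × α => FL flat q.1 ++ flat q.2)
              ({q : List α × α |
                (∀ a ∈ q.1, a ∈ X ∧ val (flat a) ≠ ↑δ) ∧ q.2 ∈ X ∧ val (flat q.2) = ↑δ})) x}.ncard
              ≤ (Set.univ : Set S).ncard :=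
            Set.ncard_le_ncard (Set.subset_univ _) Set.finite_univ
          simpa [Set.ncard_univ] using h4
        have e4 : 0 < {x | InN (Vset flat X) x}.ncard :=
          (Set.ncard_pos hfinN).mpr ⟨δ, InN.base hδV⟩
        set cS := Fintype.card S
        set A := {x | InN (Vset (fun q : List α × α => FL flat q.1 ++ flat q.2)
            ({q : List α × α |
              (∀ a ∈ q.1, a ∈ X ∧ val (flat a) ≠ ↑δ) ∧ q.2 ∈ X ∧ val (flat q.2) = ↑δ})) x}.ncard
        set B := {x | InN (Vset flat X) x}.ncard
        have e5 : (cS + 2) * A + (cS + 2) ≤ (cS + 2) * B := by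
          have : A + 1 ≤ B := e1
          calc (cS + 2) * A + (cS + 2) = (cS + 2) * (A + 1) := by ring
          _ ≤ (cS + 2) * B := Nat.mul_le_mul_left _ this
        omega
      have call2 := ih (List α × α) (fun q : List α × α => FL flat q.1 ++ flat q.2)
        ({q : List α × α |
          (∀ a ∈ q.1, a ∈ X ∧ val (flat a) ≠ ↑δ) ∧ q.2 ∈ X ∧ val (flat q.2) = ↑δ})
        (fun q q' : List α × α => Rr flat q.1 q'.1 ∧ Q q.2 q'.2)
        hrefl' htrans' hne' hQpwo' hQle' hm2
      exact caseC1 hst flat X δ call1 call2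
    · -- case C2
      have hpair : ∃ δ₁ δ₂, δ₁ ∈ Vset flat X ∧ δ₂ ∈ Vset flat X ∧ δ₁ ≠ δ₂ := by
        push_neg at hsing
        obtain ⟨s, hsV, hsne⟩ := hsing
        exact ⟨δ₀, s, hδ₀, hsV, fun h => hsne h.symm⟩
      have hnc : ∀ δ ∈ Vset flat X, ∀ n, InN (Vset flat X) n →
          n = δ ∨ ∃ u, InN (Vset flat X) u ∧ n = u * δ := by
        intro δ hδV n hn
        by_contra hcon
        push_neg at hcon
        exact hc1 ⟨δ, hδV, n, hn, hcon.1, fun u hu => hcon.2 u hu⟩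
      have hrd := rdiv_derive hpair hnc
      exact caseC2 hst hid flat X Q hrefl htrans hne hQpwo hQle hrd

/-! ### translation back to an arbitrary alphabet -/

lemma wordProd_map {A : Type} (σ : A → S) (c : A) (r : List A) :
    wordProd id (σ c) (r.map σ) = wordProd σ c r := by
  simp [wordProd, List.foldl_map]

lemma pr_map {A : Type} (σ : A → S) : ∀ (u v : List A),
    Pr (u.map σ) (v.map σ) → LeSigma ((· ≤ ·) : S → S → Prop) σ u v := by
  intro u
  induction u with
  | nil =>
    intro v h
    have h1 : v.map σ = [] := pr_nil_left h
    have h2 : v = [] := by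
      cases v with
      | nil => rfl
      | cons c t => simp at h1
    rw [h2]; exact LeSigma.nil
  | cons a u' ih =>
    intro v h
    rw [List.map_cons] at h
    generalize hv : v.map σ = L at h
    cases h with
    | cons hab hrest =>
      rename_i b vv ww
      cases v with
      | nil => simp at hv
      | cons c vrest =>
        rw [List.map_cons] at hv
        have h1 : σ c = b := by injection hv
        have h2 : vrest.map σ = vv ++ ww := by injection hv
        obtain ⟨r₁, r₂, rfl, hm₁, hm₂⟩ := List.map_eq_append_iff.mp h2
        have hab' : σ a ≤ wordProd σ c r₁ := by
          rw [← wordProd_map σ c r₁, hm₁, h1]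
          exact hab
        have hrest' : LeSigma ((· ≤ ·) : S → S → Prop) σ u' r₂ := by
          refine ih r₂ ?_
          rw [hm₂]
          exact hrest
        exact LeSigma.cons hab' hrest'

lemma FL_single : ∀ l : List S, FL (fun s : S => [s]) l = l := by
  intro l
  induction l with
  | nil => rfl
  | cons x t ih =>
    rw [FL_cons, ih]
    rfl

end Stmt5

theorem Stmt5.stmt_5_aux {S : Type} [Fintype S] [Semigroup S] [PartialOrder S]
    (hst : Stable ((· ≤ ·) : S → S → Prop))
    (h : ∀ x y e : S, IsIdemPow (y * x) e → x ≤ x * e) :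
    ∀ (A : Type) [Fintype A] (σ : A → S), ∀ f : ℕ → List A,
      ∃ i j : ℕ, i < j ∧ LeSigma ((· ≤ ·) : S → S → Prop) σ (f i) (f j) := by
  intro A _ σ f
  classical
  have e1 : {x | Stmt5.InN (Stmt5.Vset (fun s : S => [s]) Set.univ) x}.ncard ≤ Fintype.card S := by
    have h4 : {x | Stmt5.InN (Stmt5.Vset (fun s : S => [s]) Set.univ) x}.ncard ≤
        (Set.univ : Set S).ncard :=
      Set.ncard_le_ncard (Set.subset_univ _) Set.finite_univ
    simpa [Set.ncard_univ] using h4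
  have e2 : (Stmt5.Vset (fun s : S => [s]) Set.univ).ncard ≤ Fintype.card S := by
    have h4 : (Stmt5.Vset (fun s : S => [s]) Set.univ).ncard ≤ (Set.univ : Set S).ncard :=
      Set.ncard_le_ncard (Set.subset_univ _) Set.finite_univ
    simpa [Set.ncard_univ] using h4
  have hμ : (Fintype.card S + 2) * {x | Stmt5.InN (Stmt5.Vset (fun s : S => [s]) Set.univ) x}.ncard +
      (Stmt5.Vset (fun s : S => [s]) Set.univ).ncard ≤
      (Fintype.card S + 2) * Fintype.card S + Fintype.card S := by
    have := Nat.mul_le_mul_left (Fintype.card S + 2) e1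
    omega
  have hm := Stmt5.master hst h ((Fintype.card S + 2) * Fintype.card S + Fintype.card S)
    S (fun s : S => [s]) Set.univ (· = ·)
    (fun _ => rfl) (by intro a b c h1 h2; exact h1.trans h2)
    (by intro a _; simp)
    (Stmt5.pwo_finite_eq Set.finite_univ)
    (by rintro a b rfl; exact ⟨Stmt5.pr_refl _, rfl⟩)
    hμ
  obtain ⟨i, j, hij, hr⟩ := hm.exists_lt (f := fun n => (f n).map σ) (fun n a _ => Set.mem_univ a)
  refine ⟨i, j, hij, ?_⟩
  have h1 := hr.1
  rw [Stmt5.FL_single, Stmt5.FL_single] at h1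
  exact Stmt5.pr_map σ _ _ h1


/-- a finite ordered semigroup satisfying `x ≤ x·(y·x)^ω` for all
`x, y` is congenial. -/
theorem stmt_5 {S : Type} [Fintype S] [Semigroup S] [PartialOrder S]
    (hst : Stable ((· ≤ ·) : S → S → Prop))
    (h : ∀ x y e : S, IsIdemPow (y * x) e → x ≤ x * e) :
    Congenial S (· ≤ ·) := by
  intro A _ σ f
  exact Stmt5.stmt_5_aux hst h A σ f
end

section
/- Let σ : A → S be an onto map from a finite alphabet A to a finite ordered semigroup S, and let Lσ = { a u a : a ∈ A, u a finite word over A, a ≤σ a u a }. Then there exists an infinite word over A having no finite factor in Lσ if and only if there exists a nonempty finite word u over A such that the periodic infinite word u^∞ = u u u … has no finite factor in Lσ. -/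
namespace Stmt7Aux

lemma seqProd_add {S : Type} [Semigroup S] (s : ℕ → S) (i k l : ℕ) :
    seqProd s i (k + l + 1) = seqProd s i k * seqProd s (i + k + 1) l := by
  induction l with
  | zero => rfl
  | succ l ih =>
      have h1 : k + (l + 1) + 1 = (k + l + 1) + 1 := by omega
      rw [h1]
      show seqProd s i (k + l + 1) * s (i + (k + l + 1) + 1) = _
      rw [ih]
      have h2 : i + (k + l + 1) + 1 = i + k + 1 + l + 1 := by omega
      rw [h2, mul_assoc]
      rfl

lemma seqProd_congr {S : Type} [Semigroup S] (s s' : ℕ → S) (i j : ℕ) :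
    ∀ k, (∀ t, t ≤ k → s (i + t) = s' (j + t)) → seqProd s i k = seqProd s' j k
  | 0, h => by simpa [seqProd] using h 0 (le_refl 0)
  | (k+1), h => by
      show seqProd s i k * s (i + k + 1) = seqProd s' j k * s' (j + k + 1)
      rw [seqProd_congr s s' i j k (fun t ht => h t (by omega))]
      congr 1
      have := h (k+1) (le_refl _)
      simpa [← add_assoc] using this

lemma wordProd_append {A S : Type} [Semigroup S] (σ : A → S) (a : A) (l : List A) (b : A) :
    wordProd σ a (l ++ [b]) = wordProd σ a l * σ b := by
  simp [wordProd, List.foldl_append]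

lemma wordProd_range {A S : Type} [Semigroup S] (σ : A → S) (g : ℕ → A) (i : ℕ) :
    ∀ k, wordProd σ (g i) ((List.range k).map (fun t => g (i + t + 1)))
      = seqProd (fun j => σ (g j)) i k
  | 0 => by simp [wordProd, seqProd]
  | (k+1) => by
      rw [List.range_succ, List.map_append]
      simp only [List.map_cons, List.map_nil]
      rw [wordProd_append, wordProd_range σ g i k]
      rfl

lemma leSigma_single {A S : Type} [Semigroup S] {le : S → S → Prop} {σ : A → S} {a : A}
    {v : List A} (h : LeSigma le σ [a] v) :
    ∃ b v', v = b :: v' ∧ le (σ a) (wordProd σ b v') := by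
  cases h with
  | cons h1 h2 =>
      cases h2
      exact ⟨_, _, by simp, h1⟩

lemma leSigma_single_of {A S : Type} [Semigroup S] (le : S → S → Prop) (σ : A → S) (a : A)
    (v' : List A) (h : le (σ a) (wordProd σ a v')) : LeSigma le σ [a] (a :: v') := by
  have := LeSigma.cons (le := le) (σ := σ) (v := v') (w := []) h LeSigma.nil
  simpa using this

end Stmt7Aux

namespace Stmt7Aux

def Profile (A S : Type) : Type := S × Set (A × S)

instance {A S : Type} [Semigroup S] : Mul (Profile A S) :=
  ⟨fun x y => (x.1 * y.1, x.2 ∪ (fun q => (q.1, x.1 * q.2)) '' y.2)⟩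

lemma profile_mul_fst {A S : Type} [Semigroup S] (x y : Profile A S) :
    (x * y).1 = x.1 * y.1 := rfl

lemma profile_mul_snd {A S : Type} [Semigroup S] (x y : Profile A S) :
    (x * y).2 = x.2 ∪ (fun q => (q.1, x.1 * q.2)) '' y.2 := rfl

instance {A S : Type} [Semigroup S] : Semigroup (Profile A S) where
  mul_assoc x y z := by
    obtain ⟨s1, P1⟩ := x; obtain ⟨s2, P2⟩ := y; obtain ⟨s3, P3⟩ := z
    refine Prod.ext (mul_assoc _ _ _) ?_
    show (P1 ∪ (fun q => (q.1, s1 * q.2)) '' P2) ∪ (fun q => (q.1, (s1 * s2) * q.2)) '' P3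
      = P1 ∪ (fun q => (q.1, s1 * q.2)) '' (P2 ∪ (fun q => (q.1, s2 * q.2)) '' P3)
    simp only [profile_mul_snd, profile_mul_fst, Set.image_union, Set.image_image,
      Set.union_assoc]
    congr 2
    ext q
    simp [mul_assoc]

instance {A S : Type} [Finite A] [Finite S] [Semigroup S] : Finite (Profile A S) := by
  unfold Profile
  infer_instance

theorem ramsey_pairs {C : Type} [Finite C] (g : ℕ → ℕ → C) :
    ∃ f : ℕ → ℕ, StrictMono f ∧ ∃ c, ∀ i j, i < j → g (f i) (f j) = c := by
  classical
  -- one refinement step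
  have step : ∀ P : {X : Set ℕ // X.Infinite}, ∃ Q : {X : Set ℕ // X.Infinite},
      Q.1 ⊆ P.1 ∧ (∀ y ∈ Q.1, sInf P.1 < y) ∧ ∃ c, ∀ y ∈ Q.1, g (sInf P.1) y = c := by
    rintro ⟨X, hX⟩
    set a := sInf X with ha
    have hX' : (X \ {y | y ≤ a}).Infinite := hX.diff (Set.finite_Iic a)
    haveI : Infinite ↥(X \ {y | y ≤ a}) := hX'.to_subtype
    obtain ⟨c, hc⟩ := Finite.exists_infinite_fiber
      (fun y : ↥(X \ {y | y ≤ a}) => g a (y : ℕ))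
    set Y : Set ℕ := {y | ∃ h : y ∈ X \ {z | z ≤ a}, g a y = c} with hY
    have hYinf : Y.Infinite := by
      have : Function.Injective
          (fun z : ↥((fun y : ↥(X \ {y | y ≤ a}) => g a (y : ℕ)) ⁻¹' {c}) => ((z : ↥(X \ {y | y ≤ a})) : ℕ)) := by
        intro z1 z2 h12
        ext
        exact h12
      exact Set.infinite_of_injective_forall_mem this
        (fun z => ⟨(z : ↥(X \ {y | y ≤ a})).2, z.2⟩)
    refine ⟨⟨Y, hYinf⟩, ?_, ?_, c, ?_⟩
    · rintro y ⟨⟨hy1, _⟩, _⟩; exact hy1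
    · rintro y ⟨⟨_, hy2⟩, _⟩; simpa using hy2
    · rintro y ⟨_, hy⟩; exact hy
  choose F hsub hgt c hc using step
  set X : ℕ → {X : Set ℕ // X.Infinite} :=
    fun k => F^[k] ⟨Set.univ, Set.infinite_univ⟩ with hXdef
  have hXsucc : ∀ k, X (k + 1) = F (X k) := by
    intro k
    simp [hXdef, Function.iterate_succ_apply']
  set a : ℕ → ℕ := fun k => sInf (X k).1 with hadef
  have hmem : ∀ k, a k ∈ (X k).1 := fun k => Nat.sInf_mem ((X k).2.nonempty)
  have hchain : ∀ i j, i ≤ j → (X j).1 ⊆ (X i).1 := by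
    intro i j hij
    induction j with
    | zero => simp_all
    | succ j ih =>
        rcases Nat.eq_or_lt_of_le hij with h | h
        · subst h; exact fun _ h => h
        · exact (hXsucc j ▸ hsub (X j)).trans (ih (by omega))
  have hamono : StrictMono a := by
    apply strictMono_nat_of_lt_succ
    intro k
    exact hgt (X k) (a (k+1)) (by have := hmem (k+1); rwa [hXsucc k] at this)
  have hcol : ∀ i j, i < j → g (a i) (a j) = c (X i) := by
    intro i j hij
    have : a j ∈ (F (X i)).1 := by
      rw [← hXsucc i]
      exact hchain (i+1) j hij ((hmem j))
    exact hc (X i) (a j) this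
  -- pigeonhole on the colors
  haveI : Infinite ℕ := inferInstance
  obtain ⟨c0, hc0⟩ := Finite.exists_infinite_fiber (fun k => c (X k))
  have hinf : {k | c (X k) = c0}.Infinite := by
    rw [Set.infinite_coe_iff] at hc0
    convert hc0 using 1
    ext; simp
  set φ := Nat.nth (fun k => c (X k) = c0) with hφ
  have hφmono : StrictMono φ := Nat.nth_strictMono hinf
  refine ⟨fun k => a (φ k), hamono.comp hφmono, c0, ?_⟩
  intro i j hij
  rw [hcol (φ i) (φ j) (hφmono hij)]
  exact Nat.nth_mem_of_infinite hinf i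

end Stmt7Aux

namespace Stmt7Aux

lemma avoid_iff {A S : Type} [Semigroup S] [PartialOrder S] (σ : A → S) (w : ℕ → A) :
    (∀ v ∈ {v : List A | ∃ (a : A) (u' : List A),
        v = a :: (u' ++ [a]) ∧ LeSigma (· ≤ ·) σ [a] (a :: (u' ++ [a]))}, ¬ FactorOf v w) ↔
    ∀ j d, w (j + d + 1) = w j → ¬ σ (w j) ≤ seqProd (fun t => σ (w t)) j (d + 1) := by
  constructor
  · intro H j d heq hle
    set u' : List A := (List.range d).map (fun k => w (j + k + 1)) with hu'
    have hu'a : u' ++ [w j] = (List.range (d + 1)).map (fun t => w (j + t + 1)) := by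
      rw [List.range_succ, List.map_append, hu']
      simp only [List.map_cons, List.map_nil]
      congr 2
      rw [← heq]
    have hword : wordProd σ (w j) (u' ++ [w j]) = seqProd (fun t => σ (w t)) j (d + 1) := by
      rw [hu'a, wordProd_range]
    have hls : LeSigma (· ≤ ·) σ [w j] (w j :: (u' ++ [w j])) :=
      leSigma_single_of _ σ _ _ (by rw [hword]; exact hle)
    refine H (w j :: (u' ++ [w j])) ⟨w j, u', rfl, hls⟩ ⟨j, d + 1, ?_⟩
    rw [List.range_succ_eq_map, List.map_cons, List.map_map, hu'a]
    rfl
  · intro H v hv hfac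
    obtain ⟨a, x, hveq, hle⟩ := hv
    obtain ⟨p, m, hvfac⟩ := hfac
    rw [hveq] at hvfac
    rw [List.range_succ_eq_map, List.map_cons, List.map_map] at hvfac
    obtain ⟨h1, h2⟩ := List.cons.inj hvfac
    have hlen : m = x.length + 1 := by
      have := congrArg List.length h2
      simpa using this.symm
    have h2' : x ++ [a] = (List.range m).map (fun t => w (p + t + 1)) := by
      rw [h2]
      rfl
    have hlast : a = w (p + m) := by
      rw [hlen, List.range_succ, List.map_append] at h2'
      have hl2 := (List.append_inj h2' (by simp)).2
      simp only [List.map_cons, List.map_nil] at hl2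
      have := List.cons.inj hl2
      rw [this.1]
      congr 1
      omega
    obtain ⟨b, v', hbv, hble⟩ := leSigma_single hle
    obtain ⟨hb, hv'⟩ := List.cons.inj hbv
    have h1' : a = w p := h1
    have hineq : σ (w p) ≤ seqProd (fun t => σ (w t)) p m := by
      rw [← hv', ← hb, h2', h1'] at hble
      rwa [wordProd_range σ w p m] at hble
    have heq2 : w (p + x.length + 1) = w p := by
      have e1 : p + x.length + 1 = p + m := by omega
      rw [e1, ← hlast]
      exact h1'
    have := H p x.length heq2
    rw [← hlen] at this
    exact this hineq

end Stmt7Aux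

namespace Stmt7Aux

lemma main {A S : Type} [Finite A] [Finite S] [Semigroup S] [PartialOrder S]
    (σ : A → S) (w : ℕ → A)
    (hw : ∀ j d, w (j + d + 1) = w j → ¬ σ (w j) ≤ seqProd (fun t => σ (w t)) j (d + 1)) :
    ∃ (u : List A) (h : u ≠ []),
      ∀ j d, periodicWord u h (j + d + 1) = periodicWord u h j →
        ¬ σ (periodicWord u h j) ≤
          seqProd (fun t => σ (periodicWord u h t)) j (d + 1) := by
  classical
  set ψ : ℕ → S := fun t => σ (w t) with hψdef
  set tw : ℕ → Profile A S := fun t => (σ (w t), {(w t, σ (w t))}) with htwdef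
  have hfst : ∀ i k, (seqProd tw i k).1 = seqProd ψ i k := by
    intro i k
    induction k with
    | zero => rfl
    | succ k ih =>
        show (seqProd tw i k * tw (i + k + 1)).1 = _
        rw [profile_mul_fst, ih]
        rfl
  have hsnd : ∀ i k (b : A) (x : S), (b, x) ∈ (seqProd tw i k).2 ↔
      ∃ t, t ≤ k ∧ b = w (i + t) ∧ x = seqProd ψ i t := by
    intro i k b x
    induction k with
    | zero =>
        show (b, x) ∈ ({(w i, σ (w i))} : Set (A × S)) ↔ _
        simp only [Set.mem_singleton_iff, Prod.ext_iff]
        constructor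
        · rintro ⟨hb, hx⟩; exact ⟨0, le_refl _, hb, hx⟩
        · rintro ⟨t, ht, hb, hx⟩
          have : t = 0 := by omega
          subst this
          exact ⟨hb, hx⟩
    | succ k ih =>
        show (b, x) ∈ (seqProd tw i k * tw (i + k + 1)).2 ↔ _
        rw [profile_mul_snd]
        simp only [Set.mem_union, Set.mem_image]
        constructor
        · rintro (hmem | ⟨q, hq, hqe⟩)
          · obtain ⟨t, ht, hb, hx⟩ := ih.mp hmem
            exact ⟨t, by omega, hb, hx⟩
          · obtain ⟨h1, h2⟩ := Prod.mk.inj hqe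
            have hq' : q = (w (i + k + 1), σ (w (i + k + 1))) := hq
            rw [hq'] at h1 h2
            refine ⟨k + 1, le_refl _, h1.symm, ?_⟩
            rw [← h2, hfst]
            rfl
        · rintro ⟨t, ht, hb, hx⟩
          rcases Nat.lt_or_ge t (k + 1) with h | h
          · exact Or.inl (ih.mpr ⟨t, by omega, hb, hx⟩)
          · have : t = k + 1 := by omega
            subst this
            right
            refine ⟨(w (i + k + 1), σ (w (i + k + 1))), rfl, ?_⟩
            simp only [Prod.mk.injEq]
            exact ⟨hb.symm, by rw [hfst, hx]; rfl⟩
  obtain ⟨f, hf, ε, hmc⟩ := ramsey_pairs (fun i j => seqProd tw i (j - i - 1))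
  have hadd : ∀ i j k, i < j → j < k →
      seqProd tw i (k - i - 1) = seqProd tw i (j - i - 1) * seqProd tw j (k - j - 1) := by
    intro i j k hij hjk
    have h1 : k - i - 1 = (j - i - 1) + (k - j - 1) + 1 := by omega
    have h2 : i + (j - i - 1) + 1 = j := by omega
    rw [h1, seqProd_add, h2]
  have hidem : ε * ε = ε := by
    have h01 := hmc 0 1 (by omega)
    have h12 := hmc 1 2 (by omega)
    have h02 := hmc 0 2 (by omega)
    have := hadd (f 0) (f 1) (f 2) (hf (by omega)) (hf (by omega))
    rw [h01, h12, h02] at this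
    exact this.symm
  have he : ε.1 * ε.1 = ε.1 := congrArg Prod.fst hidem
  set i1 := f 0 with hi1
  have hf01 : f 0 < f 1 := hf (by omega)
  set n := f 1 - f 0 with hn0
  have hn : 0 < n := by omega
  have hf1 : f 1 = i1 + n := by omega
  set u : List A := (List.range n).map (fun k => w (i1 + k)) with hudef
  have hul : u.length = n := by simp [hudef]
  have hune : u ≠ [] := by
    intro hh
    rw [hh] at hul
    simp at hul
    omega
  set pw := periodicWord u hune with hpwdef
  have hpw : ∀ t, pw t = w (i1 + t % n) := by
    intro t
    show u.get ⟨t % u.length, _⟩ = _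
    simp [hudef, hul]
  have hpwlt : ∀ t, t < n → pw t = w (i1 + t) := by
    intro t ht
    rw [hpw t, Nat.mod_eq_of_lt ht]
  set φ : ℕ → S := fun t => σ (pw t) with hφdef
  have hφ : ∀ t, φ t = ψ (i1 + t % n) := fun t => congrArg σ (hpw t)
  have hE : ∀ k l, k < l → seqProd ψ (f k) (f l - f k - 1) = ε.1 := by
    intro k l h
    rw [← hfst, hmc k l h]
  have hφc : ∀ p k, seqProd φ p k = seqProd φ (p % n) k := by
    intro p k
    refine seqProd_congr φ φ p (p % n) k (fun t ht => ?_)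
    rw [hφ, hφ, Nat.mod_add_mod]
  have hφψ : ∀ p k, p + k < n → seqProd φ p k = seqProd ψ (i1 + p) k := by
    intro p k hpk
    refine seqProd_congr φ ψ p (i1 + p) k (fun t ht => ?_)
    rw [hφ, Nat.mod_eq_of_lt (by omega)]
    congr 1
    omega
  have hφper : ∀ k, seqProd φ n k = seqProd φ 0 k := by
    intro k
    refine seqProd_congr φ φ n 0 k (fun t ht => ?_)
    rw [hφ, hφ, Nat.add_mod_left, Nat.zero_add]
  have htrans : ∀ r', r' < n → ∀ c', 1 ≤ c' →
      ∃ t', t' ≤ f (c' + 1) - f c' - 1 ∧ w (f c' + t') = w (i1 + r') ∧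
        seqProd ψ (f c') t' = seqProd ψ i1 r' := by
    intro r' hr' c' hc'
    have hm1 : (w (i1 + r'), seqProd ψ i1 r') ∈ (seqProd tw (f 0) (f 1 - f 0 - 1)).2 :=
      (hsnd (f 0) (f 1 - f 0 - 1) _ _).mpr ⟨r', by omega, rfl, rfl⟩
    rw [hmc 0 1 (by omega), ← hmc c' (c' + 1) (by omega)] at hm1
    obtain ⟨t', ht1, ht2, ht3⟩ := (hsnd _ _ _ _).mp hm1
    exact ⟨t', ht1, ht2.symm, ht3.symm⟩
  -- the periodic power computation
  have per : ∀ r', r' < n → ∀ c, seqProd φ 0 (c * n + r') =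
      if c = 0 then seqProd ψ i1 r' else ε.1 * seqProd ψ i1 r' := by
    intro r' hr' c
    induction c with
    | zero =>
        simp only [Nat.zero_mul, Nat.zero_add, if_pos]
        have := hφψ 0 r' (by omega)
        simpa using this
    | succ c ih =>
        have es : (c + 1) * n + r' = (n - 1) + (c * n + r') + 1 := by
          have : (c + 1) * n = c * n + n := by ring
          omega
        rw [es, seqProd_add]
        have e0 : 0 + (n - 1) + 1 = n := by omega
        rw [e0, hφper, ih]
        have h1 : seqProd φ 0 (n - 1) = ε.1 := by
          have h2 := hE 0 1 (by omega)
          have h3 : f 1 - f 0 - 1 = n - 1 := by omega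
          rw [h3] at h2
          rw [← h2]
          have := hφψ 0 (n - 1) (by omega)
          simpa using this
        rw [h1]
        by_cases hc0 : c = 0
        · simp [hc0]
        · simp only [hc0, if_neg, Nat.succ_ne_zero, if_false, ← mul_assoc, he]
  -- the key transfer lemma
  have KL : ∀ p m, p < n → 1 ≤ m → ∃ j d, 1 ≤ d ∧ w j = pw p ∧ w (j + d) = pw (p + m) ∧
      seqProd ψ j d = seqProd φ p m := by
    intro p m hp hm
    rcases Nat.lt_or_ge (p + m) n with hMn | hMn
    · refine ⟨i1 + p, m, hm, (hpwlt p hp).symm, ?_, ?_⟩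
      · rw [hpwlt (p + m) hMn]
        congr 1
        omega
      · rw [hφψ p m hMn]
    · set M := p + m with hMdef
      obtain ⟨c', r', hr', hMeq, hc'⟩ : ∃ c' r', r' < n ∧ M = n * c' + r' ∧ 1 ≤ c' :=
        ⟨M / n, M % n, Nat.mod_lt _ hn, (Nat.div_add_mod M n).symm,
          (Nat.one_le_div_iff hn).mpr hMn⟩
      obtain ⟨cc, rfl⟩ : ∃ cc, c' = cc + 1 := ⟨c' - 1, by omega⟩
      have hmod : M % n = r' := by
        rw [hMeq, Nat.mul_add_mod, Nat.mod_eq_of_lt hr']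
      obtain ⟨t', ht1, ht2, ht3⟩ := htrans r' hr' (cc + 1) (by omega)
      have hfc : f 1 ≤ f (cc + 1) := hf.monotone (by omega)
      have hcc1 : f (cc + 1) < f (cc + 1 + 1) := hf (by omega)
      set j := i1 + p with hjdef
      set tt := f (cc + 1) + t' with httdef
      set d := tt - j with hddef
      have hd1 : 1 ≤ d := by omega
      refine ⟨j, d, hd1, (hpwlt p hp).symm, ?_, ?_⟩
      · have hjdtt : j + d = tt := by omega
        rw [hjdtt, ht2, hpw M, hmod]
      · have e1 : d = (n - 1 - p) + (tt - f 1) + 1 := by omega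
        have e2 : j + (n - 1 - p) + 1 = f 1 := by omega
        rw [e1, seqProd_add, e2]
        have e3 : m = (n - 1 - p) + (M - n) + 1 := by omega
        rw [e3, seqProd_add]
        have e4 : p + (n - 1 - p) + 1 = n := by omega
        rw [e4]
        have efirst : seqProd φ p (n - 1 - p) = seqProd ψ j (n - 1 - p) := hφψ p _ (by omega)
        rw [efirst, hφper]
        have hMn' : M - n = cc * n + r' := by
          have hh : n * (cc + 1) = cc * n + n := by ring
          omega
        rw [hMn', per r' hr' cc]
        congr 1
        by_cases hcc : cc = 0
        · subst hcc
          simp only [if_pos]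
          have htt : tt - f 1 = t' := by
            have : f (0 + 1) = f 1 := by norm_num
            omega
          rw [htt]
          have : f 1 = f (0 + 1) := by norm_num
          rw [this]
          exact ht3
        · rw [if_neg hcc]
          have hf1c : f 1 < f (cc + 1) := hf (by omega)
          have e5 : tt - f 1 = (f (cc + 1) - f 1 - 1) + t' + 1 := by omega
          have e6 : f 1 + (f (cc + 1) - f 1 - 1) + 1 = f (cc + 1) := by omega
          rw [e5, seqProd_add, e6, hE 1 (cc + 1) (by omega), ht3]
  -- conclusion
  refine ⟨u, hune, ?_⟩
  show ∀ p m, pw (p + m + 1) = pw p → ¬ σ (pw p) ≤ seqProd φ p (m + 1)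
  intro p m hper hle
  have hp' : p % n < n := Nat.mod_lt _ hn
  obtain ⟨j, d, hd, hj, hjd, hprod⟩ := KL (p % n) (m + 1) hp' (by omega)
  have hj' : w j = pw p := by
    rw [hj, hpw (p % n), hpw p, Nat.mod_mod_of_dvd _ (dvd_refl n)]
  have hstep : pw (p % n + (m + 1)) = pw p := by
    rw [hpw, Nat.mod_add_mod, ← hpw]
    exact hper
  have heq' : w (j + (d - 1) + 1) = w j := by
    have : j + (d - 1) + 1 = j + d := by omega
    rw [this, hjd, hstep, hj']
  refine hw j (d - 1) heq' ?_
  have : d - 1 + 1 = d := by omega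
  rw [this, hj', hprod, ← hφc]
  exact hle

end Stmt7Aux

/-- there is an infinite word over `A` with no finite factor in
`Lσ = {aua : a ≤σ aua}` iff there is a nonempty finite word `u` such that the
periodic infinite word `u^∞` has no finite factor in `Lσ`. -/
theorem stmt_7 {A S : Type} [Fintype A] [Fintype S] [Semigroup S] [PartialOrder S]
    (hst : Stable ((· ≤ ·) : S → S → Prop))
    (σ : A → S) (honto : ∀ s : S, ∃ (a : A) (w : List A), wordProd σ a w = s) :
    (∃ w : ℕ → A, ∀ v ∈ {v : List A | ∃ (a : A) (u : List A),
        v = a :: (u ++ [a]) ∧ LeSigma (· ≤ ·) σ [a] (a :: (u ++ [a]))},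
      ¬ FactorOf v w) ↔
    (∃ (u : List A) (h : u ≠ []), ∀ v ∈ {v : List A | ∃ (a : A) (u' : List A),
        v = a :: (u' ++ [a]) ∧ LeSigma (· ≤ ·) σ [a] (a :: (u' ++ [a]))},
      ¬ FactorOf v (periodicWord u h)) := by
  constructor
  · rintro ⟨w, hwav⟩
    rw [Stmt7Aux.avoid_iff] at hwav
    obtain ⟨u, hune, hmain⟩ := Stmt7Aux.main σ w hwav
    exact ⟨u, hune, (Stmt7Aux.avoid_iff σ (periodicWord u hune)).mpr hmain⟩
  · rintro ⟨u, h, hu⟩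
    exact ⟨periodicWord u h, hu⟩
end

section
/- Let σ : A → S be an onto map from a finite alphabet A to a finite ordered semigroup S, and let L'σ = { a w : a ∈ A, w a nonempty finite word over A, σ(a) ≤ σ(a w) }. Then there exists an infinite word over A having no finite factor in L'σ if and only if there exists a nonempty finite word u over A such that the periodic infinite word u^∞ = u u u … has no finite factor in L'σ. -/
namespace Stmt8Aux

open Classical

variable {S : Type} [Semigroup S]

lemma seqProd_succ (s : ℕ → S) (i n : ℕ) :
    seqProd s i (n + 1) = seqProd s i n * s (i + n + 1) := rfl

lemma seqProd_append (s : ℕ → S) (i m n : ℕ) :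
    seqProd s i m * seqProd s (i + m + 1) n = seqProd s i (m + n + 1) := by
  induction n with
  | zero => rfl
  | succ n ih =>
      rw [seqProd_succ, ← mul_assoc, ih, show i + m + 1 + n + 1 = i + (m + n + 1) + 1 by omega,
        ← seqProd_succ, show m + (n + 1) + 1 = (m + n + 1) + 1 by omega]

/-- product of `s` over positions `[a, b)`, assuming `a < b`. -/
def iProd (s : ℕ → S) (a b : ℕ) : S := seqProd s a (b - a - 1)

lemma iProd_comp (s : ℕ → S) {a b c : ℕ} (hab : a < b) (hbc : b < c) :
    iProd s a b * iProd s b c = iProd s a c := by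
  have h := seqProd_append s a (b - a - 1) (c - b - 1)
  rw [show a + (b - a - 1) + 1 = b by omega] at h
  rw [show b - a - 1 + (c - b - 1) + 1 = c - a - 1 by omega] at h
  exact h

lemma wordProd_range {A : Type} (σ : A → S) (W : ℕ → A) (x n : ℕ) :
    wordProd σ (W x) ((List.range n).map fun t => W (x + 1 + t)) =
      seqProd (fun m => σ (W m)) x n := by
  induction n with
  | zero => rfl
  | succ n ih =>
      rw [List.range_succ, List.map_append]
      show List.foldl _ _ _ = _
      rw [List.foldl_append]
      show (wordProd σ (W x) ((List.range n).map fun t => W (x + 1 + t))) * σ (W (x + 1 + n)) = _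
      rw [ih, seqProd_succ, show x + 1 + n = x + n + 1 by omega]

lemma range_map_cons {A : Type} (W : ℕ → A) (x n : ℕ) :
    (List.range (n + 1)).map (fun t => W (x + t)) =
      W x :: (List.range n).map (fun t => W (x + 1 + t)) := by
  rw [List.range_succ_eq_map, List.map_cons, List.map_map]
  simp only [Function.comp_def]
  congr 1
  apply List.map_congr_left
  intro t _
  congr 1
  omega

lemma avoid_iff {A : Type} [PartialOrder S] (σ : A → S) (W : ℕ → A) :
    (∀ v ∈ {v : List A | ∃ (a : A) (w' : List A), w' ≠ [] ∧
        v = a :: w' ∧ σ a ≤ wordProd σ a w'}, ¬ FactorOf v W) ↔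
      ∀ x n : ℕ, 1 ≤ n → ¬ σ (W x) ≤ seqProd (fun m => σ (W m)) x n := by
  constructor
  · intro h x n hn hle
    refine h ((List.range (n + 1)).map fun t => W (x + t))
      ⟨W x, (List.range n).map fun t => W (x + 1 + t), ?_, range_map_cons W x n, ?_⟩
      ⟨x, n, rfl⟩
    · simp [List.range_eq_nil]; omega
    · rw [wordProd_range]; exact hle
  · intro h v hv hf
    obtain ⟨a, w', hw', hva, hle⟩ := hv
    obtain ⟨x, n, hfac⟩ := hf
    rw [hva, range_map_cons W x n] at hfac
    obtain ⟨ha, hw⟩ := List.cons.injEq .. ▸ hfac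
    have hn : 1 ≤ n := by
      rcases Nat.eq_zero_or_pos n with h0 | h1
      · exfalso; apply hw'; rw [hw, h0]; rfl
      · exact h1
    apply h x n hn
    rw [← wordProd_range σ W x n, ← hw, ← ha]
    exact hle

/-- infinite pigeonhole on sets of naturals -/
lemma pigeon {C : Type} [Finite C] {A : Set ℕ} (hA : A.Infinite) (F : ℕ → C) :
    ∃ c : C, {x ∈ A | F x = c}.Infinite := by
  by_contra hcon
  push_neg at hcon
  have : A ⊆ ⋃ c : C, {x ∈ A | F x = c} := fun x hx => Set.mem_iUnion.2 ⟨F x, hx, rfl⟩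
  exact hA ((Set.finite_iUnion hcon).subset this)

/-- Infinite Ramsey theorem for pairs, in the form needed. -/
lemma ramsey {C : Type} [Finite C] (c : ℕ → ℕ → C) :
    ∃ (i : ℕ → ℕ) (e : C), StrictMono i ∧ ∀ a b : ℕ, a < b → c (i a) (i b) = e := by
  classical
  have key : ∀ A : Set ℕ, A.Infinite → ∃ B : Set ℕ, B.Infinite ∧ B ⊆ A ∧
      (∀ y ∈ B, sInf A < y) ∧ ∃ s : C, ∀ y ∈ B, c (sInf A) y = s := by
    intro A hA
    set x := sInf A with hx
    have h1 : {y ∈ A | x < y}.Infinite := by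
      apply ((hA.diff (Set.finite_Iic x)).mono ?_)
      intro y hy
      exact ⟨hy.1, lt_of_le_of_ne (le_of_not_gt fun hlt => hy.2 (le_of_lt hlt))
        (fun hxy => hy.2 (le_of_eq hxy.symm))⟩
    obtain ⟨s, hs⟩ := pigeon h1 (c x)
    exact ⟨{y ∈ {y ∈ A | x < y} | c x y = s}, hs, fun y hy => hy.1.1,
      fun y hy => hy.1.2, s, fun y hy => hy.2⟩
  let next : {A : Set ℕ // A.Infinite} → {A : Set ℕ // A.Infinite} :=
    fun p => ⟨(key p.1 p.2).choose, (key p.1 p.2).choose_spec.1⟩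
  let chain : ℕ → {A : Set ℕ // A.Infinite} := fun n =>
    Nat.rec ⟨Set.univ, Set.infinite_univ⟩ (fun _ p => next p) n
  have hchain : ∀ n, chain (n + 1) = next (chain n) := fun n => rfl
  set x : ℕ → ℕ := fun n => sInf (chain n).1 with hxdef
  have hmem : ∀ n, x n ∈ (chain n).1 := fun n => Nat.sInf_mem (chain n).2.nonempty
  have hsub1 : ∀ n, (chain (n + 1)).1 ⊆ (chain n).1 := by
    intro n
    rw [hchain n]
    exact (key (chain n).1 (chain n).2).choose_spec.2.1
  have hgt : ∀ n, ∀ y ∈ (chain (n + 1)).1, x n < y := by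
    intro n
    rw [hchain n]
    exact (key (chain n).1 (chain n).2).choose_spec.2.2.1
  have hcol : ∀ n, ∃ s : C, ∀ y ∈ (chain (n + 1)).1, c (x n) y = s := by
    intro n
    rw [hchain n]
    exact (key (chain n).1 (chain n).2).choose_spec.2.2.2
  have hsub : ∀ m n, m ≤ n → (chain n).1 ⊆ (chain m).1 := by
    intro m n h
    induction n with
    | zero => rw [Nat.le_zero.mp h]
    | succ n ih =>
        rcases Nat.eq_or_lt_of_le h with h' | h'
        · rw [h']
        · exact fun z hz => ih (Nat.lt_succ_iff.mp h') (hsub1 n hz)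
  have hmem' : ∀ m n, m < n → x n ∈ (chain (m + 1)).1 :=
    fun m n h => hsub (m + 1) n h (hmem n)
  have hxmono : ∀ m n, m < n → x m < x n := fun m n h => hgt m (x n) (hmem' m n h)
  set d : ℕ → C := fun n => (hcol n).choose with hd
  have hdc : ∀ m n, m < n → c (x m) (x n) = d m :=
    fun m n h => (hcol m).choose_spec (x n) (hmem' m n h)
  obtain ⟨e, he⟩ := pigeon (Set.infinite_univ (α := ℕ)) d
  have heM : {m : ℕ | d m = e}.Infinite := by
    apply he.mono; intro y hy; exact hy.2
  let ψ : ℕ → ℕ := fun n => Nat.rec (heM.nonempty.choose) (fun _ p => (heM.exists_gt p).choose) n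
  have hψsucc : ∀ n, ψ n < ψ (n + 1) ∧ ψ (n + 1) ∈ {m : ℕ | d m = e} := by
    intro n
    obtain ⟨h1, h2⟩ := (heM.exists_gt (ψ n)).choose_spec
    exact ⟨h2, h1⟩
  have hψmem : ∀ n, ψ n ∈ {m : ℕ | d m = e} := by
    intro n
    cases n with
    | zero => exact heM.nonempty.choose_spec
    | succ n => exact (hψsucc n).2
  have hψmono : StrictMono ψ := strictMono_nat_of_lt_succ fun n => (hψsucc n).1
  refine ⟨fun n => x (ψ n), e, ?_, ?_⟩
  · intro a b hab
    exact hxmono _ _ (hψmono hab)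
  · intro a b hab
    rw [hdc _ _ (hψmono hab)]
    exact hψmem a

/-- recurrence bound for a function into a finite type -/
lemma exists_recur {C : Type} [Finite C] (Ψ : ℕ → C) :
    ∃ x₀ : ℕ, ∀ x, x₀ ≤ x → ∀ B : ℕ, ∃ x', B ≤ x' ∧ Ψ x' = Ψ x := by
  classical
  cases nonempty_fintype C
  let B0 : C → ℕ := fun s => if h : ∃ B, ∀ y, B ≤ y → Ψ y ≠ s then h.choose else 0
  refine ⟨Finset.univ.sup B0, fun x hx B => ?_⟩
  by_contra hcon
  push_neg at hcon
  have hex : ∃ B', ∀ y, B' ≤ y → Ψ y ≠ Ψ x := ⟨B, fun y hy => hcon y hy⟩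
  have h1 : B0 (Ψ x) = hex.choose := dif_pos hex
  have h2 : B0 (Ψ x) ≤ x := le_trans (Finset.le_sup (Finset.mem_univ (Ψ x))) hx
  exact hex.choose_spec x (h1 ▸ h2) rfl

end Stmt8Aux


namespace Stmt8Aux

lemma periodicWord_apply {A : Type} (w : ℕ → A) (c L : ℕ) (hL : 0 < L)
    (hne : ((List.range L).map fun t => w (c + t)) ≠ []) (m : ℕ) :
    periodicWord ((List.range L).map fun t => w (c + t)) hne m = w (c + m % L) := by
  simp [periodicWord, List.get_eq_getElem]

end Stmt8Aux

theorem stmt_8' {A S : Type} [Fintype A] [Fintype S] [Semigroup S] [PartialOrder S]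
    (hst : Stable ((· ≤ ·) : S → S → Prop))
    (σ : A → S) (honto : ∀ s : S, ∃ (a : A) (w : List A), wordProd σ a w = s) :
    (∃ w : ℕ → A, ∀ v ∈ {v : List A | ∃ (a : A) (w' : List A), w' ≠ [] ∧
        v = a :: w' ∧ σ a ≤ wordProd σ a w'}, ¬ FactorOf v w) ↔
    (∃ (u : List A) (h : u ≠ []), ∀ v ∈ {v : List A | ∃ (a : A) (w' : List A),
        w' ≠ [] ∧ v = a :: w' ∧ σ a ≤ wordProd σ a w'},
      ¬ FactorOf v (periodicWord u h)) := by
  classical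
  constructor
  · rintro ⟨w, hw⟩
    set g : ℕ → S := fun m => σ (w m) with hg
    have hA : ∀ x n : ℕ, 1 ≤ n → ¬ σ (w x) ≤ seqProd g x n :=
      (Stmt8Aux.avoid_iff σ w).mp hw
    set f : ℕ → ℕ → S := fun a b => Stmt8Aux.iProd g a b with hf
    have hA' : ∀ x z : ℕ, x + 2 ≤ z → ¬ σ (w x) ≤ f x z := by
      intro x z hz
      exact hA x (z - x - 1) (by omega)
    obtain ⟨i, e, hi, hmono⟩ := Stmt8Aux.ramsey (fun a b => Stmt8Aux.iProd g a b)
    have hmono' : ∀ a b : ℕ, a < b → f (i a) (i b) = e := hmono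
    have hcomp : ∀ {a b c : ℕ}, a < b → b < c → f a b * f b c = f a c :=
      fun hab hbc => Stmt8Aux.iProd_comp g hab hbc
    have hee : e * e = e := by
      calc e * e = f (i 0) (i 1) * f (i 1) (i 2) := by
            rw [hmono' 0 1 (by omega), hmono' 1 2 (by omega)]
        _ = f (i 0) (i 2) := hcomp (hi (by omega)) (hi (by omega))
        _ = e := hmono' 0 2 (by omega)
    set Ψ : ℕ → S := fun yy => e * f (i 0) yy with hΨ
    have hP1 : ∀ (j yy : ℕ), i j < yy → e * f (i j) yy = Ψ yy := by
      intro j yy hj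
      rcases Nat.eq_zero_or_pos j with h0 | hpos
      · rw [h0]
      · show _ = e * f (i 0) yy
        have hsplit : f (i 0) yy = e * f (i j) yy := by
          rw [← hmono' 0 j hpos]
          exact (hcomp (hi hpos) hj).symm
        rw [hsplit, ← mul_assoc, hee]
    obtain ⟨x₀, hrec⟩ := Stmt8Aux.exists_recur Ψ
    set N := x₀ + 1 with hN
    set P : ℕ → Finset S :=
      fun l => (Finset.Ioo 0 (i (l + 1) - i l)).image (fun r => f (i l) (i l + r)) with hP
    obtain ⟨a0, b0, hab, hPab⟩ := Finite.exists_ne_map_eq_of_infinite (fun m : ℕ => P (N + m))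
    have hex2 : ∃ k k' : ℕ, k < k' ∧ P k = P k' ∧ N ≤ k := by
      rcases lt_or_gt_of_ne hab with h | h
      · exact ⟨N + a0, N + b0, by omega, hPab, by omega⟩
      · exact ⟨N + b0, N + a0, by omega, hPab.symm, by omega⟩
    obtain ⟨k, k', hkk', hPkk, hkN⟩ := hex2
    have hik : i k < i k' := hi hkk'
    have hx₀k : x₀ < i k := by
      have := hi.le_apply (x := k)
      omega
    set L := i k' - i k with hL
    have hLpos : 0 < L := by omega
    have hne : ((List.range L).map fun t => w (i k + t)) ≠ [] := by
      intro hcon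
      apply_fun List.length at hcon
      simp at hcon
      omega
    refine ⟨_, hne, (Stmt8Aux.avoid_iff σ _).mpr ?_⟩
    set U := periodicWord _ hne with hU
    have hUm : ∀ m, U m = w (i k + m % L) := fun m =>
      Stmt8Aux.periodicWord_apply w (i k) L hLpos hne m
    set G : ℕ → S := fun m => σ (U m) with hG
    have hGper : ∀ m, G (m + L) = G m := by
      intro m
      show σ (U (m + L)) = σ (U m)
      rw [hUm, hUm, Nat.add_mod_right]
    have hshift1 : ∀ c n, seqProd G (c + L) n = seqProd G c n := by
      intro c n
      induction n with
      | zero => exact hGper c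
      | succ n ih =>
          rw [Stmt8Aux.seqProd_succ, Stmt8Aux.seqProd_succ, ih,
            show c + L + n + 1 = (c + n + 1) + L by omega, hGper]
    have hshift : ∀ c t n, seqProd G (c + t * L) n = seqProd G c n := by
      intro c t n
      induction t with
      | zero => simp
      | succ t ih => rw [show c + (t + 1) * L = (c + t * L) + L by ring, hshift1, ih]
    have hinper : ∀ p n : ℕ, p + n < L → seqProd G p n = seqProd g (i k + p) n := by
      intro p n hpn
      induction n with
      | zero =>
          show σ (U p) = σ (w (i k + p))
          rw [hUm, Nat.mod_eq_of_lt (by omega)]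
      | succ n ih =>
          rw [Stmt8Aux.seqProd_succ, Stmt8Aux.seqProd_succ, ih (by omega)]
          congr 1
          show σ (U (p + n + 1)) = σ (w (i k + p + n + 1))
          rw [hUm, Nat.mod_eq_of_lt (by omega), show i k + (p + n + 1) = i k + p + n + 1 by omega]
    set FF : ℕ → ℕ → S := fun a b => Stmt8Aux.iProd G a b with hFF
    have hFcomp : ∀ {a b c : ℕ}, a < b → b < c → FF a b * FF b c = FF a c :=
      fun hab hbc => Stmt8Aux.iProd_comp G hab hbc
    have hin : ∀ m, 1 ≤ m → m ≤ L → FF 0 m = f (i k) (i k + m) := by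
      intro m h1 h2
      show seqProd G 0 (m - 0 - 1) = seqProd g (i k) (i k + m - i k - 1)
      rw [show m - 0 - 1 = m - 1 by omega, show i k + m - i k - 1 = m - 1 by omega]
      have := hinper 0 (m - 1) (by omega)
      simpa using this
    have hFFL : ∀ m, L < m → FF L m = FF 0 (m - L) := by
      intro m hm
      show seqProd G L (m - L - 1) = seqProd G 0 (m - L - 0 - 1)
      have h := hshift 0 1 (m - L - 1)
      rw [show 0 + 1 * L = L by omega] at h
      rw [show m - L - 0 - 1 = m - L - 1 by omega]
      exact h
    have hFe : FF 0 L = e := by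
      rw [hin L hLpos le_rfl, show i k + L = i k' by omega]
      exact hmono' k k' hkk'
    -- the trichotomy for the tail value
    have Wval : ∀ m, 1 ≤ m →
        (∃ r, 1 ≤ r ∧ r < i (k + 1) - i k ∧ FF 0 m = f (i k) (i k + r)) ∨
        FF 0 m = e ∨ (∃ yy, i k < yy ∧ x₀ ≤ yy ∧ FF 0 m = Ψ yy) := by
      intro m
      induction m using Nat.strong_induction_on with
      | _ m ih =>
        intro hm
        rcases le_or_gt m L with hmL | hmL
        · -- within the first two periods
          have hval := hin m hm hmL
          rcases lt_or_ge m (i (k + 1) - i k) with hgap | hgap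
          · exact Or.inl ⟨m, hm, hgap, hval⟩
          · have hik1 : i k < i (k + 1) := hi (by omega)
            have hle1 : i (k + 1) ≤ i k + m := by omega
            rcases eq_or_lt_of_le hle1 with heq | hlt
            · refine Or.inr (Or.inl ?_)
              rw [hval, ← heq]
              exact hmono' k (k + 1) (by omega)
            · refine Or.inr (Or.inr ⟨i k + m, by omega, by omega, ?_⟩)
              rw [hval, ← hcomp hik1 hlt, hmono' k (k + 1) (by omega)]
              exact hP1 (k + 1) (i k + m) hlt
        · -- m > L : peel off one period
          have hsplit : FF 0 m = e * FF 0 (m - L) := by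
            rw [← hFcomp hLpos hmL, hFe, hFFL m hmL]
          rcases ih (m - L) (by omega) (by omega) with ⟨r, hr1, hr2, heq⟩ | heq | ⟨yy, hyy1, hyy2, heq⟩
          · refine Or.inr (Or.inr ⟨i k + r, by omega, by omega, ?_⟩)
            rw [hsplit, heq]
            exact hP1 k (i k + r) (by omega)
          · exact Or.inr (Or.inl (by rw [hsplit, heq, hee]))
          · refine Or.inr (Or.inr ⟨yy, hyy1, hyy2, ?_⟩)
            rw [hsplit, heq]
            show e * (e * f (i 0) yy) = Ψ yy
            rw [← mul_assoc, hee]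
    -- main avoidance argument
    intro y n hn hle
    set p := y % L with hp'
    have hp : p < L := Nat.mod_lt _ hLpos
    set x := i k + p with hx
    have hxik : x < i k' := by omega
    have hUy : U y = U p := by
      rw [hUm, hUm, hp', Nat.mod_mod_of_dvd y (dvd_refl L)]
    have hsy : seqProd G y n = seqProd G p n := by
      calc seqProd G y n = seqProd G (p + y / L * L) n := by rw [hp', Nat.mod_add_div']
        _ = seqProd G p n := hshift p (y / L) n
    rw [hUy, hsy] at hle
    have hUp : σ (U p) = σ (w x) := by
      rw [hUm, Nat.mod_eq_of_lt hp]
    rw [hUp] at hle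
    set z := p + n + 1 with hz
    rcases lt_or_ge (p + n) L with hzL | hzL
    · -- factor inside one period: genuine factor of w
      rw [hinper p n hzL] at hle
      exact hA x n hn hle
    · -- wrapping factor
      have hseq : seqProd G p n = FF p z := by
        show _ = seqProd G p (z - p - 1)
        rw [show z - p - 1 = n by omega]
      have hsplit : FF p z = f x (i k') * FF 0 (z - L) := by
        rw [← hFcomp (show p < L by omega) (show L < z by omega), hFFL z (by omega)]
        congr 1
        show seqProd G p (L - p - 1) = seqProd g x (i k' - x - 1)
        rw [show i k' - x - 1 = L - p - 1 by omega]
        exact hinper p (L - p - 1) (by omega)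
      rw [hseq, hsplit] at hle
      rcases Wval (z - L) (by omega) with ⟨r, hr1, hr2, heq⟩ | heq | ⟨yy, hyy1, hyy2, heq⟩
      · -- prefix of the first block: use the matching later block
        have hmem : f (i k) (i k + r) ∈ P k := by
          rw [hP]
          exact Finset.mem_image.mpr ⟨r, Finset.mem_Ioo.mpr ⟨by omega, hr2⟩, rfl⟩
        rw [hPkk, hP] at hmem
        obtain ⟨r', hr', heq'⟩ := Finset.mem_image.mp hmem
        rw [Finset.mem_Ioo] at hr'
        have hik'1 : i k' < i k' + r' := by omega
        have : f x (i k') * FF 0 (z - L) = f x (i k' + r') := by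
          rw [heq, ← heq', hcomp hxik hik'1]
        rw [this] at hle
        exact hA' x (i k' + r') (by omega) hle
      · -- ends at a block boundary
        have hik'1 : i k' < i (k' + 1) := hi (by omega)
        have : f x (i k') * FF 0 (z - L) = f x (i (k' + 1)) := by
          calc f x (i k') * FF 0 (z - L) = f x (i k') * e := by rw [heq]
            _ = f x (i k') * f (i k') (i (k' + 1)) := by rw [hmono' k' (k' + 1) (by omega)]
            _ = f x (i (k' + 1)) := hcomp hxik hik'1
        rw [this] at hle
        have : x + 2 ≤ i (k' + 1) := by
          have := hi (show k' < k' + 1 by omega)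
          omega
        exact hA' x (i (k' + 1)) this hle
      · -- recurrent shadow value
        obtain ⟨x', hx'B, hΨ'⟩ := hrec yy hyy2 (i (k' + 1) + 1)
        have hik'1 : i k' < i (k' + 1) := hi (by omega)
        have hikx' : i (k' + 1) < x' := by omega
        have : f x (i k') * FF 0 (z - L) = f x x' := by
          calc f x (i k') * FF 0 (z - L) = f x (i k') * Ψ yy := by rw [heq]
            _ = f x (i k') * Ψ x' := by rw [hΨ']
            _ = f x (i k') * (e * f (i (k' + 1)) x') := by rw [← hP1 (k' + 1) x' hikx']
            _ = f x (i k') * (f (i k') (i (k' + 1)) * f (i (k' + 1)) x') := by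
                rw [hmono' k' (k' + 1) (by omega)]
            _ = f x (i k') * f (i k') (i (k' + 1)) * f (i (k' + 1)) x' := by rw [mul_assoc]
            _ = f x (i (k' + 1)) * f (i (k' + 1)) x' := by rw [hcomp hxik hik'1]
            _ = f x x' := hcomp (lt_trans hxik hik'1) hikx'
        rw [this] at hle
        exact hA' x x' (by omega) hle
  · rintro ⟨u, h, hu⟩
    exact ⟨periodicWord u h, hu⟩


/-- there is an infinite word over `A` with no finite factor in
`L'σ = {aw : w ≠ ε, σ(a) ≤ σ(aw)}` iff there is a nonempty finite word `u`
such that the periodic infinite word `u^∞` has no finite factor in `L'σ`. -/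
theorem stmt_8 {A S : Type} [Fintype A] [Fintype S] [Semigroup S] [PartialOrder S]
    (hst : Stable ((· ≤ ·) : S → S → Prop))
    (σ : A → S) (honto : ∀ s : S, ∃ (a : A) (w : List A), wordProd σ a w = s) :
    (∃ w : ℕ → A, ∀ v ∈ {v : List A | ∃ (a : A) (w' : List A), w' ≠ [] ∧
        v = a :: w' ∧ σ a ≤ wordProd σ a w'}, ¬ FactorOf v w) ↔
    (∃ (u : List A) (h : u ≠ []), ∀ v ∈ {v : List A | ∃ (a : A) (w' : List A),
        w' ≠ [] ∧ v = a :: w' ∧ σ a ≤ wordProd σ a w'},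
      ¬ FactorOf v (periodicWord u h)) := stmt_8' hst σ honto
end
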